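/- arXiv:1808.09963 — 5 statements merged into one kernel-verified Lean document; each statement's English description precedes it below -/
import Mathlib

section
/- For all integers k ≥ 1 and n ≥ 2, there exists a Gallai k-coloring of the complete graph on n·2^k vertices that contains no monochromatic cycle on 2n+1 vertices; consequently GR_k(C_{2n+1}) ≥ n·2^k + 1. -/
/-!
Split the `n * 2 ^ k` vertices into `2 ^ k` blocks of `n` consecutive vertices and color an edge
by the highest bit in which the block indices of its endpoints differ (`0` inside a block). The
highest differing bit is an ultrametric, so every triangle has two edges of the same color.
Color `0` is confined to the `2 ^ (k - 1)` cliques of size `2 * n` formed by pairs of sibling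
blocks, too small to carry a `(2 * n + 1)`-cycle, and every other color `i` is bipartite, split
by bit `i` of the block index, so it has no odd cycle.
-/

/-- A symmetric edge-coloring of a complete graph: `c u v` is the color of edge `{u,v}`. -/
def IsSymmColoring {V C : Type*} (c : V → V → C) : Prop :=
  ∀ u v : V, c u v = c v u

/-- The coloring contains a rainbow triangle: three distinct vertices whose three
connecting edges receive three pairwise distinct colors. -/
def HasRainbowTriangle {V C : Type*} (c : V → V → C) : Prop :=
  ∃ u v w : V, u ≠ v ∧ u ≠ w ∧ v ≠ w ∧
    c u v ≠ c u w ∧ c u v ≠ c v w ∧ c u w ≠ c v w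

/-- The coloring contains a cycle on `m` distinct vertices all of whose edges
receive the color `b`. -/
def HasMonoCycleColor {V C : Type*} (c : V → V → C) (m : ℕ) (b : C) : Prop :=
  ∃ f : ZMod m → V, Function.Injective f ∧ ∀ i : ZMod m, c (f i) (f (i + 1)) = b

/-- The coloring contains a monochromatic cycle on `m` distinct vertices. -/
def HasMonoCycle {V C : Type*} (c : V → V → C) (m : ℕ) : Prop :=
  ∃ b : C, HasMonoCycleColor c m b

namespace Nat

theorem log2_xor_of_log2_lt {x y : ℕ} (h : x.log2 < y.log2) : (x ^^^ y).log2 = y.log2 := by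
  have hy : y ≠ 0 := by rintro rfl; simp [Nat.log2_zero] at h
  have hx : x < 2 ^ y.log2 :=
    lt_of_lt_of_le Nat.lt_log2_self (Nat.pow_le_pow_right two_pos h)
  have hbit : (x ^^^ y).testBit y.log2 = true := by
    simp [Nat.testBit_lt_two_pow hx, Nat.testBit_log2 hy]
  have hxy : x ^^^ y ≠ 0 := by rintro h0; simp [h0] at hbit
  rw [Nat.log2_eq_iff hxy]
  exact ⟨Nat.ge_two_pow_of_testBit hbit,
    Nat.xor_lt_two_pow (hx.trans (Nat.pow_lt_pow_succ one_lt_two)) Nat.lt_log2_self⟩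

theorem log2_xor_lt {a b k : ℕ} (hk : 0 < k) (ha : a < 2 ^ k) (hb : b < 2 ^ k) :
    (a ^^^ b).log2 < k := by
  rcases eq_or_ne (a ^^^ b) 0 with h | h
  · simpa [h] using hk
  · exact (Nat.log2_lt h).mpr (Nat.xor_lt_two_pow ha hb)

theorem log2_xor_eq_or_eq (a b c : ℕ) :
    (a ^^^ b).log2 = (a ^^^ c).log2 ∨ (a ^^^ b).log2 = (b ^^^ c).log2 ∨
      (a ^^^ c).log2 = (b ^^^ c).log2 := by
  have hac : a ^^^ c = (a ^^^ b) ^^^ (b ^^^ c) := by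
    rw [Nat.xor_assoc, ← Nat.xor_assoc b b c, Nat.xor_self, Nat.zero_xor]
  rcases lt_trichotomy (a ^^^ b).log2 (b ^^^ c).log2 with h | h | h
  · exact .inr (.inr (by rw [hac, log2_xor_of_log2_lt h]))
  · exact .inr (.inl h)
  · exact .inl (by rw [hac, Nat.xor_comm (a ^^^ b), log2_xor_of_log2_lt h])

theorem div_two_eq_of_log2_xor_eq_zero {a b : ℕ} (h : (a ^^^ b).log2 = 0) : a / 2 = b / 2 := by
  have hlt : a ^^^ b < 2 := by
    rcases eq_or_ne (a ^^^ b) 0 with h0 | h0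
    · omega
    · simpa using (Nat.log2_lt h0 (k := 1)).mp (by omega)
  have : (a ^^^ b) >>> 1 = 0 := by rw [Nat.shiftRight_one]; omega
  rwa [Nat.shiftRight_xor_distrib, Nat.xor_eq_zero_iff, Nat.shiftRight_one,
    Nat.shiftRight_one] at this

theorem testBit_ne_of_log2_xor_eq {a b i : ℕ} (hi : i ≠ 0) (h : (a ^^^ b).log2 = i) :
    a.testBit i ≠ b.testBit i := by
  have hab : a ^^^ b ≠ 0 := by rintro h0; rw [h0, Nat.log2_zero] at h; exact hi h.symm
  have := Nat.testBit_log2 hab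
  rw [h, Nat.testBit_xor] at this
  intro heq
  simp [heq] at this

theorem card_fiber_div_le (N : ℕ) {d : ℕ} (hd : 0 < d) (a : ℕ) :
    Nat.card {v : Fin N // (v : ℕ) / d = a} ≤ d := by
  have hinj : Function.Injective
      fun v : {v : Fin N // (v : ℕ) / d = a} => (⟨v.1 % d, Nat.mod_lt _ hd⟩ : Fin d) := by
    rintro ⟨u, hu⟩ ⟨v, hv⟩ huv
    simp only [Fin.mk.injEq] at huv
    ext
    rw [← Nat.div_add_mod (u : ℕ) d, ← Nat.div_add_mod (v : ℕ) d, hu, hv, huv]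
  simpa using Nat.card_le_card_of_injective _ hinj

end Nat

section MonoCycle

variable {V C : Type*} {c : V → V → C} {m : ℕ} {b : C}

theorem not_hasMonoCycleColor_of_bipartite (p : V → Bool)
    (hp : ∀ u v, c u v = b → p u ≠ p v) (hm : Odd m) : ¬ HasMonoCycleColor c m b := by
  rintro ⟨f, -, hf⟩
  let g : ℕ → ZMod 2 := fun j => ((p (f j)).toNat : ZMod 2)
  have hstep : ∀ j, g (j + 1) = g j + 1 := by
    have hflip : ∀ x y : Bool, x ≠ y → (y.toNat : ZMod 2) = x.toNat + 1 := by decide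
    intro j
    simpa [g] using hflip _ _ (hp _ _ (hf j))
  have hwalk : ∀ j : ℕ, g j = g 0 + j := by
    intro j
    induction j with
    | zero => simp
    | succ j ih => rw [hstep, ih, Nat.cast_succ, add_assoc]
  have hm2 := hwalk m
  simp only [g, ZMod.natCast_self, Nat.cast_zero, left_eq_add,
    ZMod.natCast_eq_zero_iff_even] at hm2
  exact Nat.not_even_iff_odd.mpr hm hm2

theorem not_hasMonoCycleColor_of_card_fiber_lt {α : Type*} [Finite V] (q : V → α)
    (hq : ∀ u v, c u v = b → q u = q v) (hcard : ∀ a, Nat.card {v // q v = a} < m) :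
    ¬ HasMonoCycleColor c m b := by
  rintro ⟨f, hf_inj, hf⟩
  have : NeZero m := ⟨by have := hcard (q (f 0)); omega⟩
  have hconst : ∀ i : ZMod m, q (f i) = q (f 0) := by
    suffices ∀ j : ℕ, q (f j) = q (f 0) from fun i => by simpa using this i.val
    intro j
    induction j with
    | zero => simp
    | succ j ih => rw [Nat.cast_succ, ← hq _ _ (hf j), ih]
  have hinj : Function.Injective fun i : ZMod m => (⟨f i, hconst i⟩ : {v // q v = q (f 0)}) :=
    fun i j hij => hf_inj (congrArg Subtype.val hij)
  have := Nat.card_le_card_of_injective _ hinj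
  rw [Nat.card_zmod] at this
  exact (hcard _).not_ge this

end MonoCycle

def blockXorColoring (n k : ℕ) (hk : 0 < k) (u v : Fin (n * 2 ^ k)) : Fin k :=
  ⟨((u : ℕ) / n ^^^ (v : ℕ) / n).log2,
    Nat.log2_xor_lt hk (Nat.div_lt_of_lt_mul u.isLt) (Nat.div_lt_of_lt_mul v.isLt)⟩

section BlockXorColoring

variable {n k : ℕ} {hk : 0 < k}

theorem isSymmColoring_blockXorColoring : IsSymmColoring (blockXorColoring n k hk) :=
  fun _ _ => Fin.ext (congrArg Nat.log2 (Nat.xor_comm _ _))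

theorem not_hasRainbowTriangle_blockXorColoring :
    ¬ HasRainbowTriangle (blockXorColoring n k hk) := by
  rintro ⟨u, v, w, -, -, -, huv_uw, huv_vw, huw_vw⟩
  rcases Nat.log2_xor_eq_or_eq (u / n) (v / n) (w / n) with h | h | h
  exacts [huv_uw (Fin.ext h), huv_vw (Fin.ext h), huw_vw (Fin.ext h)]

theorem not_hasMonoCycle_blockXorColoring (hn : 0 < n) :
    ¬ HasMonoCycle (blockXorColoring n k hk) (2 * n + 1) := by
  rintro ⟨b, hb⟩
  rcases eq_or_ne (b : ℕ) 0 with hb0 | hb0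
  · refine not_hasMonoCycleColor_of_card_fiber_lt (fun v : Fin (n * 2 ^ k) => (v : ℕ) / n / 2)
      (fun u v huv => Nat.div_two_eq_of_log2_xor_eq_zero ?_) (fun a => ?_) hb
    · rw [← hb0, ← huv]; rfl
    · simp only [Nat.div_div_eq_div_mul]
      have := Nat.card_fiber_div_le (n * 2 ^ k) (Nat.mul_pos hn two_pos) a
      omega
  · refine not_hasMonoCycleColor_of_bipartite
      (fun v : Fin (n * 2 ^ k) => ((v : ℕ) / n).testBit b)
      (fun u v huv => Nat.testBit_ne_of_log2_xor_eq hb0 ?_) (odd_two_mul_add_one n) hb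
    rw [← huv]; rfl

end BlockXorColoring

/-- For all integers `k ≥ 1` and `n ≥ 2`, there exists a Gallai `k`-coloring of the
complete graph on `n·2^k` vertices containing no monochromatic cycle on `2n+1`
vertices; consequently `GR_k(C_{2n+1}) ≥ n·2^k + 1`. -/
theorem gallai_ramsey_odd_cycle_lower_bound (k n : ℕ) (hk : 1 ≤ k) (hn : 2 ≤ n) :
    ∃ c : Fin (n * 2 ^ k) → Fin (n * 2 ^ k) → Fin k,
      IsSymmColoring c ∧ ¬ HasRainbowTriangle c ∧ ¬ HasMonoCycle c (2 * n + 1) :=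
  ⟨blockXorColoring n k hk, isSymmColoring_blockXorColoring,
    not_hasRainbowTriangle_blockXorColoring, not_hasMonoCycle_blockXorColoring (by omega)⟩
end

section
/- For any Gallai coloring c of a complete graph G on at least 2 vertices, the vertex set of G can be partitioned into nonempty sets V_1, …, V_p with p > 1 such that: for each pair i ≠ j, all edges between V_i and V_j receive the same color under c, and the set of edges of G joining vertices in different parts uses at most two colors in total. -/
open Function Set

namespace Gallai

variable {V C : Type*} {c : V → V → C}

theorem color_eq_of_ne_of_ne (hc : ¬ HasRainbowTriangle c) {u v w : V} (huv : u ≠ v)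
    (huw : u ≠ w) (hvw : v ≠ w) (h₁ : c u v ≠ c u w) (h₂ : c u v ≠ c v w) :
    c u w = c v w := by
  by_contra h₃
  exact hc ⟨u, v, w, huv, huw, hvw, h₁, h₂, h₃⟩

theorem not_hasRainbowTriangle_comp {W : Type*} {g : W → V} (hg : Injective g)
    (hc : ¬ HasRainbowTriangle c) : ¬ HasRainbowTriangle fun a b => c (g a) (g b) := by
  rintro ⟨u, v, w, huv, huw, hvw, h⟩
  exact hc ⟨g u, g v, g w, hg.ne huv, hg.ne huw, hg.ne hvw, h⟩

def IsModule (c : V → V → C) (M : Set V) : Prop :=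
  ∀ ⦃u⦄, u ∈ M → ∀ ⦃u'⦄, u' ∈ M → ∀ ⦃w⦄, w ∉ M → c u w = c u' w

theorem IsModule.of_forall_eq {M : Set V} (x : V)
    (h : ∀ u ∈ M, ∀ w ∉ M, c u w = c x w) : IsModule c M :=
  fun u hu u' hu' w hw => (h u hu w hw).trans (h u' hu' w hw).symm

def IsPrimitive (c : V → V → C) : Prop :=
  ∀ M : Set V, IsModule c M → M.Nontrivial → M = univ

/-- The blocks are the fibres of `f`, and `d` is the coloring of the reduced graph on the blocks. -/
def HasPartition (c : V → V → C) : Prop :=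
  ∃ (p : ℕ) (f : V → Fin p) (d : Fin p → Fin p → C), 1 < p ∧ Surjective f ∧
    (∀ u v, f u ≠ f v → c u v = d (f u) (f v)) ∧
    ∃ c₁ c₂, ∀ i j, i ≠ j → d i j = c₁ ∨ d i j = c₂

theorem HasPartition.of_forall_eq_or_eq [Finite V] [Nontrivial V] {c₁ c₂ : C}
    (h : ∀ u v, u ≠ v → c u v = c₁ ∨ c u v = c₂) : HasPartition c := by
  have := Fintype.ofFinite V
  let e := Fintype.equivFin V
  exact ⟨Fintype.card V, e, fun i j => c (e.symm i) (e.symm j), Fintype.one_lt_card,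
    e.surjective, fun u v _ => by simp, c₁, c₂,
    fun i j hij => h _ _ (e.symm.injective.ne hij)⟩

theorem HasPartition.of_comp {W : Type*} {d : W → W → C} (hd : HasPartition d) {g : V → W}
    (hg : Surjective g) (hcd : ∀ u v, g u ≠ g v → c u v = d (g u) (g v)) :
    HasPartition c := by
  obtain ⟨p, f, e, hp, hf, hfe, hcol⟩ := hd
  exact ⟨p, f ∘ g, e, hp, hf.comp hg,
    fun u v h => (hcd u v (ne_of_apply_ne f h)).trans (hfe _ _ h), hcol⟩

/-- `{v // v ∉ M ∨ v = m}` is the vertex set with the module `M` collapsed to `m`. -/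
theorem IsModule.hasPartition_of_restrict (hsymm : IsSymmColoring c) {M : Set V}
    (hM : IsModule c M) {m : V} (hm : m ∈ M)
    (h : HasPartition fun a b : {v // v ∉ M ∨ v = m} => c a b) : HasPartition c := by
  classical
  let g (v : V) : {v // v ∉ M ∨ v = m} :=
    if hv : v ∈ M then ⟨m, .inr rfl⟩ else ⟨v, .inl hv⟩
  refine h.of_comp (g := g) ?_ fun u v huv => ?_
  · rintro ⟨v, hv | hv⟩
    · exact ⟨v, dif_neg hv⟩
    · exact ⟨m, by simp [g, hm, hv]⟩
  · by_cases hu : u ∈ M <;> by_cases hv : v ∈ M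
    · exact absurd (by simp [g, hu, hv]) huv
    · simpa [g, hu, hv] using hM hu hm hv
    · simpa [g, hu, hv, hsymm u] using hM hv hm hu
    · simp [g, hu, hv]

def colorGraph (c : V → V → C) (δ : C) : SimpleGraph V :=
  SimpleGraph.fromRel fun u v => c u v = δ

theorem colorGraph_adj (hsymm : IsSymmColoring c) {δ : C} {u v : V} :
    (colorGraph c δ).Adj u v ↔ u ≠ v ∧ c u v = δ := by
  simp [colorGraph, hsymm v u]

theorem isModule_setOf_reachable (hsymm : IsSymmColoring c) (hc : ¬ HasRainbowTriangle c)
    (δ : C) (y : V) : IsModule c {v | (colorGraph c δ).Reachable y v} := by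
  refine IsModule.of_forall_eq y fun u hu w hw => ?_
  have hδ : ∀ a, (colorGraph c δ).Reachable y a → a ≠ w ∧ c a w ≠ δ := fun a ha =>
    have haw : a ≠ w := ne_of_mem_of_not_mem ha hw
    ⟨haw, fun h => hw (ha.trans ((colorGraph_adj hsymm).2 ⟨haw, h⟩).reachable)⟩
  induction (SimpleGraph.reachable_iff_reflTransGen _ _).1 hu with
  | refl => rfl
  | @tail a u ha hau ih =>
    obtain ⟨hne, hau⟩ := (colorGraph_adj hsymm).1 hau
    have ha := (SimpleGraph.reachable_iff_reflTransGen _ _).2 ha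
    obtain ⟨haw, haδ⟩ := hδ a ha
    obtain ⟨huw, huδ⟩ := hδ u (ha.trans ((colorGraph_adj hsymm).2 ⟨hne, hau⟩).reachable)
    rw [← ih ha]
    exact (color_eq_of_ne_of_ne hc hne haw huw (hau ▸ haδ.symm) (hau ▸ huδ.symm)).symm

theorem IsPrimitive.exists_color_eq (hprim : IsPrimitive c) (hsymm : IsSymmColoring c)
    (hc : ¬ HasRainbowTriangle c) {y z : V} (hyz : y ≠ z) (x : V) :
    ∃ v, v ≠ x ∧ c x v = c y z := by
  have hyz' : (colorGraph c (c y z)).Adj y z := (colorGraph_adj hsymm).2 ⟨hyz, rfl⟩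
  have hK := hprim _ (isModule_setOf_reachable hsymm hc (c y z) y)
    ⟨y, SimpleGraph.Reachable.refl y, z, hyz'.reachable, hyz⟩
  have hx : (colorGraph c (c y z)).Reachable y x := (Set.ext_iff.1 hK x).2 (mem_univ x)
  rcases ((SimpleGraph.reachable_iff_reflTransGen _ _).1 hx).cases_tail with
    rfl | ⟨a, -, hax⟩
  · exact ⟨z, hyz.symm, rfl⟩
  · obtain ⟨hax, h⟩ := (colorGraph_adj hsymm).1 hax
    exact ⟨a, hax, hsymm x a ▸ h⟩

theorem IsPrimitive.forall_eq_or_eq (hprim : IsPrimitive c) (hsymm : IsSymmColoring c)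
    (hc : ¬ HasRainbowTriangle c) {x : V} {s t : C}
    (hx : ∀ v, v ≠ x → c x v = s ∨ c x v = t)
    (u v : V) (huv : u ≠ v) : c u v = s ∨ c u v = t := by
  obtain ⟨w, hw, hxw⟩ := hprim.exists_color_eq hsymm hc huv x
  exact hxw ▸ hx w hw

section Puncture

variable {x : V} {ι : Type*} {f : {v // v ≠ x} → ι} {d : ι → ι → C}

theorem isModule_insert_fibers (hc : ¬ HasRainbowTriangle c)
    (hd : ∀ a b, f a ≠ f b → c a b = d (f a) (f b)) {γ : C}
    (hγ : ∀ i j, i ≠ j → d i j ≠ γ) :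
    IsModule c (insert x (Subtype.val '' (f ⁻¹' (f '' {y | c x y = γ})))) := by
  refine IsModule.of_forall_eq x ?_
  rintro u hu w hw
  have hwx : w ≠ x := ne_of_mem_of_not_mem (mem_insert x _) hw |>.symm
  rcases hu with rfl | ⟨a, ⟨y, hy, hya⟩, rfl⟩
  · rfl
  set b : {v // v ≠ x} := ⟨w, hwx⟩
  have hyb : f y ≠ f b := fun h => hw (mem_insert_of_mem _ ⟨b, ⟨y, hy, h⟩, rfl⟩)
  have hxb : c x w ≠ γ := fun h => hw (mem_insert_of_mem _ ⟨b, ⟨b, h, rfl⟩, rfl⟩)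
  have hyw : c y w = d (f y) (f b) := hd y b hyb
  have hxyw : c x w = c y w :=
    color_eq_of_ne_of_ne hc y.2.symm hwx.symm (Subtype.coe_ne_coe.2 (ne_of_apply_ne f hyb))
      (hy ▸ hxb.symm) (hy ▸ hyw ▸ (hγ _ _ hyb).symm)
  rw [hxyw, hyw, hya]
  exact hd a b (hya ▸ hyb)

theorem IsPrimitive.exists_fiber_color_eq (hprim : IsPrimitive c) (hc : ¬ HasRainbowTriangle c)
    (hd : ∀ a b, f a ≠ f b → c a b = d (f a) (f b)) {y : {v // v ≠ x}}
    (hγ : ∀ i j, i ≠ j → d i j ≠ c x y) (a : {v // v ≠ x}) :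
    ∃ y', f y' = f a ∧ c x y' = c x y := by
  have hM := hprim _ (isModule_insert_fibers hc hd hγ)
    ⟨x, mem_insert x _, y, mem_insert_of_mem _ ⟨y, ⟨y, rfl, rfl⟩, rfl⟩, y.2.symm⟩
  rcases (Set.ext_iff.1 hM a).2 (mem_univ _) with h | ⟨a', ⟨y', hy', hfy'⟩, ha'⟩
  · exact absurd h a.2
  · obtain rfl := Subtype.ext ha'
    exact ⟨y', hfy', hy'⟩

theorem IsPrimitive.color_eq_of_ne (hprim : IsPrimitive c) (hsymm : IsSymmColoring c)
    (hc : ¬ HasRainbowTriangle c) [Nontrivial ι] (hf : Surjective f)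
    (hd : ∀ a b, f a ≠ f b → c a b = d (f a) (f b)) {y : {v // v ≠ x}}
    (hγ : ∀ i j, i ≠ j → d i j ≠ c x y) {v v' : {v // v ≠ x}} (hv : c x v ≠ c x y)
    (hv' : c x v' ≠ c x y) : c x v = c x v' := by
  have hsees : ∀ u w : {v // v ≠ x}, c x u ≠ c x y → f u ≠ f w → c u w = c x u := by
    intro u w hu huw
    obtain ⟨y', hfy', hy'⟩ := hprim.exists_fiber_color_eq hc hd hγ w
    have huy' : f u ≠ f y' := hfy' ▸ huw
    have hy'x : c y' x ≠ c y' u := by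
      rw [hsymm y' x, hy', hsymm y' u, hd u y' huy']; exact (hγ _ _ huy').symm
    have hy'u : c y' x ≠ c x u := by rw [hsymm y' x, hy']; exact hu.symm
    rw [hd u w huw, ← hfy', ← hd u y' huy', hsymm u y']
    exact color_eq_of_ne_of_ne hc y'.2 (Subtype.coe_ne_coe.2 (ne_of_apply_ne f huy')).symm
      u.2.symm hy'x hy'u
  by_cases hvv' : f v = f v'
  · obtain ⟨j, hj⟩ := exists_ne (f v)
    obtain ⟨w, rfl⟩ := hf j
    have hvw : f v ≠ f w := Ne.symm hj
    have hv'w : f v' ≠ f w := hvv' ▸ hvw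
    rw [← hsees v w hv hvw, ← hsees v' w hv' hv'w, hd v w hvw, hd v' w hv'w, hvv']
  · rw [← hsees v v' hv hvv', hsymm, hsees v' v hv' (Ne.symm hvv')]

end Puncture

theorem IsPrimitive.exists_colors_at (hprim : IsPrimitive c) (hsymm : IsSymmColoring c)
    (hc : ¬ HasRainbowTriangle c) {x : V} (hW : HasPartition fun a b : {v // v ≠ x} => c a b) :
    ∃ s t, ∀ v, v ≠ x → c x v = s ∨ c x v = t := by
  obtain ⟨p, f, d, hp, hf, hd, r, b, hrb⟩ := hW
  have : Nontrivial (Fin p) := Fin.nontrivial_iff_two_le.2 hp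
  by_cases hγ : ∃ y : {v // v ≠ x}, c x y ≠ r ∧ c x y ≠ b
  · obtain ⟨y, hyr, hyb⟩ := hγ
    have hγ : ∀ i j, i ≠ j → d i j ≠ c x y := fun i j hij h =>
      (hrb i j hij).elim (fun e => hyr (h ▸ e)) (fun e => hyb (h ▸ e))
    by_cases hv : ∃ v : {v // v ≠ x}, c x v ≠ c x y
    · obtain ⟨v, hv⟩ := hv
      exact ⟨c x y, c x v, fun w hw => or_iff_not_imp_left.2 fun h =>
        hprim.color_eq_of_ne hsymm hc hf hd hγ (v := ⟨w, hw⟩) h hv⟩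
    · push Not at hv
      exact ⟨c x y, c x y, fun w hw => .inl (hv ⟨w, hw⟩)⟩
  · push Not at hγ
    exact ⟨r, b, fun v hv => or_iff_not_imp_left.2 (hγ ⟨v, hv⟩)⟩

theorem hasPartition [Finite V] [hV : Nontrivial V] (hsymm : IsSymmColoring c)
    (hc : ¬ HasRainbowTriangle c) : HasPartition c := by
  induction V using Finite.induction_subsingleton_or_nontrivial generalizing hV with
  | hbase V => exact (not_nontrivial V hV).elim
  | hstep V ih =>
    by_cases hprim : IsPrimitive c
    · obtain ⟨x, y, hxy⟩ := exists_pair_ne V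
      obtain ⟨s, t, hst⟩ : ∃ s t, ∀ v, v ≠ x → c x v = s ∨ c x v = t := by
        by_cases hW : Nontrivial {v // v ≠ x}
        · exact hprim.exists_colors_at hsymm hc <| ih _ (Finite.card_subtype_lt (not_not.2 rfl))
            (fun a b => hsymm a b) (not_hasRainbowTriangle_comp Subtype.val_injective hc)
        · rw [not_nontrivial_iff_subsingleton] at hW
          refine ⟨c x y, c x y, fun v hv => .inl ?_⟩
          have : (⟨v, hv⟩ : {v // v ≠ x}) = ⟨y, hxy.symm⟩ := Subsingleton.elim _ _
          rw [Subtype.mk.inj this]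
      exact .of_forall_eq_or_eq (hprim.forall_eq_or_eq hsymm hc hst)
    · obtain ⟨M, hM, ⟨m, hm, m', hm', hmm'⟩, hMV⟩ :
          ∃ M, IsModule c M ∧ M.Nontrivial ∧ M ≠ univ := by
        simpa [IsPrimitive] using hprim
      obtain ⟨w, hw⟩ := (ne_univ_iff_exists_notMem M).1 hMV
      have : Nontrivial {v // v ∉ M ∨ v = m} :=
        ⟨⟨w, .inl hw⟩, ⟨m, .inr rfl⟩, fun h => hw (Subtype.mk.inj h ▸ hm)⟩
      exact hM.hasPartition_of_restrict hsymm hm <|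
        ih _ (Finite.card_subtype_lt (x := m') (by simp [hm', hmm'.symm]))
          (fun a b => hsymm a b) (not_hasRainbowTriangle_comp Subtype.val_injective hc)

end Gallai

theorem gallai_partition_general {V C : Type*} [Fintype V]
    (hV : 2 ≤ Fintype.card V)
    (c : V → V → C) (hsymm : IsSymmColoring c) (hgallai : ¬ HasRainbowTriangle c) :
    ∃ (p : ℕ) (P : Fin p → Finset V), 1 < p ∧
      (∀ i, (P i).Nonempty) ∧
      (∀ v : V, ∃! i, v ∈ P i) ∧
      (∀ i j : Fin p, i ≠ j →
        ∀ u ∈ P i, ∀ u' ∈ P i, ∀ v ∈ P j, ∀ v' ∈ P j, c u v = c u' v') ∧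
      (∃ c₁ c₂ : C, ∀ i j : Fin p, i ≠ j →
        ∀ u ∈ P i, ∀ v ∈ P j, c u v = c₁ ∨ c u v = c₂) := by
  have := Fintype.one_lt_card_iff_nontrivial.1 hV
  obtain ⟨p, f, d, hp, hf, hfd, c₁, c₂, hd⟩ := Gallai.hasPartition hsymm hgallai
  refine ⟨p, fun i => Finset.univ.filter (f · = i), hp, fun i => ?_,
    fun v => ⟨f v, by simp, by simp⟩, ?_, c₁, c₂, ?_⟩ <;>
    simp only [Finset.mem_filter, Finset.mem_univ, true_and]
  · obtain ⟨v, rfl⟩ := hf i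
    exact ⟨v, by simp⟩
  · rintro i j hij u rfl u' hu' v rfl v' hv'
    rw [hfd u v hij, hfd u' v' (by rwa [hu', hv']), hu', hv']
  · rintro i j hij u rfl v rfl
    rw [hfd u v hij]
    exact hd _ _ hij

/-- **Gallai's structure theorem.** For any Gallai coloring `c` of a complete graph on a
finite vertex set `V` with at least 2 vertices, `V` can be partitioned into `p > 1`
nonempty parts `P 0, …, P (p-1)` such that all edges between any fixed pair of distinct
parts receive a single color, and at most two colors appear in total on edges joining
vertices in different parts. -/
theorem gallai_partition {V C : Type*} [Fintype V] [DecidableEq V]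
    (hV : 2 ≤ Fintype.card V)
    (c : V → V → C) (hsymm : IsSymmColoring c) (hgallai : ¬ HasRainbowTriangle c) :
    ∃ (p : ℕ) (P : Fin p → Finset V), 1 < p ∧
      (∀ i, (P i).Nonempty) ∧
      (∀ v : V, ∃! i, v ∈ P i) ∧
      (∀ i j : Fin p, i ≠ j →
        ∀ u ∈ P i, ∀ u' ∈ P i, ∀ v ∈ P j, ∀ v' ∈ P j, c u v = c u' v') ∧
      (∃ c₁ c₂ : C, ∀ i j : Fin p, i ≠ j →
        ∀ u ∈ P i, ∀ v ∈ P j, c u v = c₁ ∨ c u v = c₂) :=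
  gallai_partition_general hV c hsymm hgallai
end

section
/- For all integers ℓ ≥ 3 and n ≥ 1, let n_1, n_2, …, n_ℓ be positive integers such that n_i ≤ n for all i ∈ {1,…,ℓ} and n_1 + n_2 + ⋯ + n_ℓ ≥ 2n + 1. Then the complete multipartite graph K_{n_1, n_2, …, n_ℓ} contains a cycle of length 2n+1. -/
/-!
Number the vertices `0, …, m - 1` part after part, so that every part is an interval of at most
`n` consecutive numbers, and walk through the first `2n + 1` of them with step `n + 1` modulo
`2n + 1`. Since `2 (n + 1) = 1` modulo `2n + 1`, the step is invertible and the walk closes up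
into a cycle through `2n + 1` distinct vertices; each step moves the position by `n + 1` or by
`-n`, so it always leaves the current part.
-/

theorem finSigmaFinEquiv_lt_add_of_fst_eq {m : ℕ} {n : Fin m → ℕ}
    {u v : (i : Fin m) × Fin (n i)} (h : u.1 = v.1) :
    (finSigmaFinEquiv u : ℕ) < finSigmaFinEquiv v + n v.1 := by
  obtain ⟨i, x⟩ := u
  obtain ⟨j, y⟩ := v
  obtain rfl : i = j := h
  rw [finSigmaFinEquiv_apply, finSigmaFinEquiv_apply, add_assoc]
  exact Nat.add_lt_add_left (x.2.trans_le (Nat.le_add_left _ _)) _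

theorem ZMod.two_mul_natCast_succ (n : ℕ) :
    (2 : ZMod (2 * n + 1)) * ((n + 1 : ℕ) : ZMod (2 * n + 1)) = 1 := by
  have h : ((2 * n + 1 : ℕ) : ZMod (2 * n + 1)) = 0 := ZMod.natCast_self _
  push_cast at h ⊢
  linear_combination h

theorem exists_cycle_of_fiber_diam_lt {α : Type*} {m n : ℕ} (p : Fin m → α)
    (hm : 2 * n + 1 ≤ m) (hp : ∀ a b, p a = p b → (a : ℕ) < b + n) :
    ∃ g : ZMod (2 * n + 1) → Fin m,
      Function.Injective g ∧ ∀ j, p (g j) ≠ p (g (j + 1)) := by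
  have hn : 0 < n := by simpa using hp ⟨0, by omega⟩ ⟨0, by omega⟩ rfl
  set c : ZMod (2 * n + 1) := ((n + 1 : ℕ) : ZMod (2 * n + 1))
  have hc : IsUnit c := IsUnit.of_mul_eq_one_right _ (ZMod.two_mul_natCast_succ n)
  have hc_val : c.val = n + 1 := by
    rw [ZMod.val_natCast, Nat.mod_eq_of_lt (by omega)]
  let g (j : ZMod (2 * n + 1)) : Fin m := ⟨(c * j).val, (ZMod.val_lt _).trans_le hm⟩
  refine ⟨g, fun j₁ j₂ h ↦ hc.mul_right_injective (ZMod.val_injective _ (Fin.mk.inj h)),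
    fun j h ↦ ?_⟩
  have h₁ := hp _ _ h
  have h₂ := hp _ _ h.symm
  have hstep : c * (j + 1) = c * j + c := by ring
  simp only [g, hstep] at h₁ h₂
  rcases lt_or_ge ((c * j).val + c.val) (2 * n + 1) with hlt | hge
  · rw [ZMod.val_add_of_lt hlt] at h₁ h₂
    omega
  · rw [ZMod.val_add_of_le hge] at h₁ h₂
    omega

theorem complete_multipartite_odd_cycle_general (ℓ n : ℕ)
    (f : Fin ℓ → ℕ) (hle : ∀ i, f i ≤ n)
    (hsum : 2 * n + 1 ≤ ∑ i, f i) :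
    ∃ g : ZMod (2 * n + 1) → Σ i : Fin ℓ, Fin (f i),
      Function.Injective g ∧ ∀ j : ZMod (2 * n + 1), (g j).1 ≠ (g (j + 1)).1 := by
  have hpart : ∀ a b : Fin (∑ i, f i), (finSigmaFinEquiv.symm a).1 = (finSigmaFinEquiv.symm b).1 →
      (a : ℕ) < b + n := fun a b h ↦ by
    have := finSigmaFinEquiv_lt_add_of_fst_eq h
    rw [Equiv.apply_symm_apply, Equiv.apply_symm_apply] at this
    have := hle (finSigmaFinEquiv.symm b).1
    omega
  obtain ⟨g, hg, hadj⟩ := exists_cycle_of_fiber_diam_lt _ hsum hpart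
  exact ⟨finSigmaFinEquiv.symm ∘ g, finSigmaFinEquiv.symm.injective.comp hg, hadj⟩

/-- For all integers `ℓ ≥ 3` and `n ≥ 1`, if `n_1, …, n_ℓ` are positive integers with
`n_i ≤ n` for all `i` and `n_1 + ⋯ + n_ℓ ≥ 2n + 1`, then the complete multipartite
graph `K_{n_1, …, n_ℓ}` (vertices are pairs `⟨i, x⟩` with `x : Fin (n_i)`, two vertices
adjacent iff they lie in different parts) contains a cycle of length `2n+1`. -/
theorem complete_multipartite_odd_cycle (ℓ n : ℕ) (hl : 3 ≤ ℓ) (hn : 1 ≤ n)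
    (f : Fin ℓ → ℕ) (hpos : ∀ i, 1 ≤ f i) (hle : ∀ i, f i ≤ n)
    (hsum : 2 * n + 1 ≤ ∑ i, f i) :
    ∃ g : ZMod (2 * n + 1) → Σ i : Fin ℓ, Fin (f i),
      Function.Injective g ∧ ∀ j : ZMod (2 * n + 1), (g j).1 ≠ (g (j + 1)).1 :=
  complete_multipartite_odd_cycle_general ℓ n f hle hsum
end

section
/- Let n ≥ 2 and let c be an edge-coloring of a complete graph G that contains no monochromatic cycle on 2n+1 vertices in color b (for some fixed color b). Let Y, Z ⊆ V(G) be disjoint sets with |Y| ≥ n and |Z| ≥ n such that every edge between Y and Z receives color b. Then: (1) no vertex of V(G) \ (Y ∪ Z) has all of its edges to Y ∪ Z colored b; (2) if |Z| ≥ n+1, then no edge with both endpoints in Z receives color b; and (3) if |Y| ≥ n+1, then no edge with both endpoints in Y receives color b. -/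
/-! The `2n+1`-cycle `v, x₁, y₁, x₂, y₂, …, xₙ, yₙ, v` alternates between the two sides of a
`b`-colored complete bipartite graph `Kₙ,ₙ` and is closed through a vertex `v` outside it that
is joined in color `b` to `x₁` and to the whole second side. In (1) the outside vertex is given;
in (2) and (3) a `b`-edge `v x₁` inside one side plays that role, once `v` is removed from its
side, which then still has `n` vertices. -/

theorem ZMod.val_add_one {n : ℕ} [NeZero n] (k : ZMod n) : (k + 1).val = (k.val + 1) % n := by
  rw [ZMod.val_add, ZMod.val_one_eq_one_mod, Nat.add_mod_mod]

theorem Finset.exists_nodup_list_subset {α : Type*} {s : Finset α} {n : ℕ} (h : n ≤ s.card) :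
    ∃ l : List α, l.Nodup ∧ l.length = n ∧ ∀ x ∈ l, x ∈ s := by
  obtain ⟨t, hts, rfl⟩ := Finset.exists_subset_card_eq h
  exact ⟨t.toList, t.nodup_toList, t.length_toList, fun x hx => hts (Finset.mem_toList.1 hx)⟩

theorem List.isChain_interleave {α : Type*} {R : α → α → Prop} [Std.Symm R] :
    ∀ {xs ys : List α}, ys.length ≤ xs.length → xs.length ≤ ys.length + 1 →
      (∀ x ∈ xs, ∀ y ∈ ys, R x y) → (interleave xs ys).IsChain R
  | [], [], _, _, _ => by simp
  | x :: xs, ys, h₁, h₂, hxy => by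
    rw [cons_interleave, isChain_cons]
    refine ⟨fun y hy => ?_, isChain_interleave (by simpa using h₂) (by simpa using h₁)
      fun y hy x' hx' => symm (hxy x' (mem_cons_of_mem _ hx') y hy)⟩
    cases ys with
    | nil => simp_all
    | cons y' ys =>
      obtain rfl : y' = y := by simpa using hy
      exact hxy x mem_cons_self y' mem_cons_self
termination_by xs ys => xs.length + ys.length

section Coloring

variable {V C : Type*} {c : V → V → C} {b : C}

theorem hasMonoCycleColor_of_isChain {v : V} {l : List V} (hnodup : (v :: l).Nodup)
    (hchain : (v :: l ++ [v]).IsChain fun x y => c x y = b) :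
    HasMonoCycleColor c (l.length + 1) b := by
  refine ⟨fun k => (v :: l)[k.val]'k.val_lt,
    fun k k' h => ZMod.val_injective _ (hnodup.getElem_inj_iff.1 h), fun k => ?_⟩
  have hk := k.val_lt
  have hedge := hchain.getElem k.val (by simp; omega)
  rw [List.getElem_append_left (by simpa using hk)] at hedge
  rcases Nat.lt_or_ge (k.val + 1) (l.length + 1) with h | h
  · rw [List.getElem_append_left (by simpa using h)] at hedge
    simpa [ZMod.val_add_one, Nat.mod_eq_of_lt h] using hedge
  · -- the last entry of `v :: l ++ [v]` repeats the first, so this edge closes the cycle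
    obtain hk' : k.val = l.length := by omega
    simpa [ZMod.val_add_one, hk'] using hedge

theorem hasMonoCycleColor_of_complete_bipartite [DecidableEq V] (hsymm : IsSymmColoring c)
    {n : ℕ} (hn : 0 < n) {A B : Finset V} (hAB : Disjoint A B)
    (hcomplete : ∀ x ∈ A, ∀ y ∈ B, c x y = b)
    (hA : n ≤ A.card) (hB : n ≤ B.card) {v a : V} (hvA : v ∉ A) (hvB : v ∉ B) (ha : a ∈ A)
    (hva : c v a = b) (hvy : ∀ y ∈ B, c v y = b) :
    HasMonoCycleColor c (2 * n + 1) b := by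
  have : Std.Symm fun x y => c x y = b := ⟨fun x y h => (hsymm y x).trans h⟩
  obtain ⟨xs, hxs, hxs_len, hxsA⟩ := Finset.exists_nodup_list_subset (s := A.erase a) (n := n - 1)
    (by rw [Finset.card_erase_of_mem ha]; omega)
  obtain ⟨ys, hys, hys_len, hysB⟩ := Finset.exists_nodup_list_subset hB
  have hmemA : ∀ x ∈ a :: xs, x ∈ A := by
    simpa [ha] using fun x hx => Finset.mem_of_mem_erase (hxsA x hx)
  have hnodup : (a :: xs).Nodup := List.nodup_cons.2 ⟨fun h => by simpa using hxsA a h, hxs⟩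
  have hlen : (List.interleave (a :: xs) ys).length + 1 = 2 * n + 1 := by
    simp only [List.length_interleave, List.length_cons]; omega
  rw [← hlen]
  refine hasMonoCycleColor_of_isChain (v := v) ?_ ?_
  · refine List.nodup_cons.2 ⟨fun hv => ?_, List.interleave_perm_append.nodup_iff.2
      (List.nodup_append.2 ⟨hnodup, hys, fun x hx y hy => ?_⟩)⟩
    · rcases List.mem_append.1 (List.interleave_perm_append.mem_iff.1 hv) with h | h
      exacts [hvA (hmemA v h), hvB (hysB v h)]
    · rintro rfl; exact Finset.disjoint_left.1 hAB (hmemA x hx) (hysB x hy)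
  · rw [List.cons_append, ← List.interleave_append_left (by simp; omega), List.isChain_cons]
    refine ⟨by simpa using hva, List.isChain_interleave (by simp; omega) (by simp; omega) ?_⟩
    simp only [List.mem_append, List.mem_singleton]
    rintro x (hx | rfl) y hy
    exacts [hcomplete x (hmemA x hx) y (hysB y hy), hvy y (hysB y hy)]

theorem color_ne_of_complete_bipartite [DecidableEq V] (hsymm : IsSymmColoring c)
    {n : ℕ} (hn : 0 < n) (hnocycle : ¬ HasMonoCycleColor c (2 * n + 1) b)
    {A B : Finset V} (hAB : Disjoint A B) (hcomplete : ∀ x ∈ A, ∀ y ∈ B, c x y = b)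
    (hA : n + 1 ≤ A.card) (hB : n ≤ B.card) {x x' : V} (hx : x ∈ A) (hx' : x' ∈ A)
    (hxx' : x ≠ x') : c x x' ≠ b := fun h =>
  hnocycle <| hasMonoCycleColor_of_complete_bipartite hsymm hn
    (hAB.mono_left (A.erase_subset x)) (fun y hy => hcomplete y (Finset.mem_of_mem_erase hy))
    (by rw [Finset.card_erase_of_mem hx]; omega) hB (A.notMem_erase x)
    (Finset.disjoint_left.1 hAB hx) (Finset.mem_erase.2 ⟨hxx'.symm, hx'⟩) h (hcomplete x hx)

end Coloring

/-- Let `n ≥ 2` and let `c` be a symmetric edge-coloring of a complete graph with no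
monochromatic cycle on `2n+1` vertices in color `b`.  If `Y` and `Z` are disjoint sets
with `|Y| ≥ n` and `|Z| ≥ n` such that all edges between `Y` and `Z` receive color `b`,
then: (1) no vertex outside `Y ∪ Z` has all its edges to `Y ∪ Z` colored `b`;
(2) if `|Z| ≥ n+1`, no edge inside `Z` has color `b`; and
(3) if `|Y| ≥ n+1`, no edge inside `Y` has color `b`. -/
theorem mc_complete_sets_no_mono_odd_cycle {V C : Type*} [DecidableEq V]
    (n : ℕ) (hn : 2 ≤ n)
    (c : V → V → C) (hsymm : IsSymmColoring c) (b : C)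
    (hnocycle : ¬ HasMonoCycleColor c (2 * n + 1) b)
    (Y Z : Finset V) (hdisj : Disjoint Y Z)
    (hY : n ≤ Y.card) (hZ : n ≤ Z.card)
    (hcomplete : ∀ y ∈ Y, ∀ z ∈ Z, c y z = b) :
    (∀ v : V, v ∉ Y ∪ Z → ¬ (∀ w ∈ Y ∪ Z, c v w = b)) ∧
    (n + 1 ≤ Z.card → ∀ z ∈ Z, ∀ z' ∈ Z, z ≠ z' → c z z' ≠ b) ∧
    (n + 1 ≤ Y.card → ∀ y ∈ Y, ∀ y' ∈ Y, y ≠ y' → c y y' ≠ b) := by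
  have hn_pos : 0 < n := by omega
  refine ⟨fun v hv hall => ?_, fun hZ' z hz z' hz' => ?_, fun hY' y hy y' hy' =>
    color_ne_of_complete_bipartite hsymm hn_pos hnocycle hdisj hcomplete hY' hZ hy hy'⟩
  · obtain ⟨a, ha⟩ := Finset.card_pos.1 (hn_pos.trans_le hY)
    rw [Finset.mem_union, not_or] at hv
    exact hnocycle <| hasMonoCycleColor_of_complete_bipartite hsymm hn_pos hdisj hcomplete hY hZ
      hv.1 hv.2 ha (hall a (Finset.mem_union_left Z ha))
      fun z hz => hall z (Finset.mem_union_right Y hz)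
  · exact color_ne_of_complete_bipartite hsymm hn_pos hnocycle hdisj.symm
      (fun z hz y hy => (hsymm z y).trans (hcomplete y hy z hz)) hZ' hY hz hz'
end

section
/- For all integers k ≥ 1, every Gallai k-coloring of the complete graph on 5^{k/2} + 1 vertices (when k is even), respectively 2·5^{(k−1)/2} + 1 vertices (when k is odd), contains a monochromatic triangle, and these bounds are sharp: there exist Gallai k-colorings of the complete graphs on 5^{k/2} vertices (k even) and 2·5^{(k−1)/2} vertices (k odd) with no monochromatic triangle. That is, GR_k(K_3) = 5^{k/2} + 1 for even k and GR_k(K_3) = 2·5^{(k−1)/2} + 1 for odd k. -/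
/-- The coloring contains a monochromatic triangle: three distinct vertices whose three
connecting edges all receive the same color. -/
def HasMonoTriangle {V C : Type*} (c : V → V → C) : Prop :=
  ∃ u v w : V, u ≠ v ∧ u ≠ w ∧ v ≠ w ∧ c u v = c u w ∧ c u v = c v w

section ChungGrahamCore

set_option linter.unusedSectionVars false
set_option maxHeartbeats 1000000

variable {α : Type*} [DecidableEq α]

def TriOK (c : α → α → ℕ) (u v w : α) : Prop :=
  c u v = c u w ∨ c u v = c v w ∨ c u w = c v w

def NoRainbowOn (c : α → α → ℕ) (S : Finset α) : Prop :=
  ∀ u ∈ S, ∀ v ∈ S, ∀ w ∈ S, TriOK c u v w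

def NoMonoOn (c : α → α → ℕ) (S : Finset α) : Prop :=
  ∀ u ∈ S, ∀ v ∈ S, ∀ w ∈ S, u ≠ v → u ≠ w → v ≠ w →
    ¬(c u v = c u w ∧ c u v = c v w)

def usedOn (c : α → α → ℕ) (S : Finset α) : Finset ℕ :=
  ((S ×ˢ S).filter (fun p => p.1 ≠ p.2)).image (fun p => c p.1 p.2)

lemma mem_usedOn {c : α → α → ℕ} {S : Finset α} {u v : α}
    (hu : u ∈ S) (hv : v ∈ S) (huv : u ≠ v) : c u v ∈ usedOn c S := by
  apply Finset.mem_image.mpr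
  exact ⟨(u, v), by simp [Finset.mem_filter, hu, hv, huv], rfl⟩

lemma usedOn_exists {c : α → α → ℕ} {S : Finset α} {γ : ℕ} (h : γ ∈ usedOn c S) :
    ∃ u ∈ S, ∃ v ∈ S, u ≠ v ∧ c u v = γ := by
  obtain ⟨p, hp, rfl⟩ := Finset.mem_image.mp h
  simp only [Finset.mem_filter, Finset.mem_product] at hp
  exact ⟨p.1, hp.1.1, p.2, hp.1.2, hp.2, rfl⟩

lemma usedOn_mono {c : α → α → ℕ} {S T : Finset α} (h : S ⊆ T) :
    usedOn c S ⊆ usedOn c T := by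
  intro γ hγ
  obtain ⟨u, hu, v, hv, huv, rfl⟩ := usedOn_exists hγ
  exact mem_usedOn (h hu) (h hv) huv

def ModuleOn (c : α → α → ℕ) (S X : Finset α) : Prop :=
  X ⊆ S ∧ ∀ z ∈ S, z ∉ X → ∀ u ∈ X, ∀ v ∈ X, c z u = c z v

def Reach (c : α → α → ℕ) (τ : ℕ) (S : Finset α) : α → α → Prop :=
  Relation.ReflTransGen (fun p q => q ∈ S ∧ p ≠ q ∧ c p q = τ)

variable {c : α → α → ℕ} {S : Finset α} {τ : ℕ} {a z : α}

lemma reach_mem (h : Reach c τ S a z) : z = a ∨ z ∈ S := by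
  induction h with
  | refl => exact Or.inl rfl
  | tail _ h2 _ => exact Or.inr h2.1

open Classical in
noncomputable def comp (c : α → α → ℕ) (τ : ℕ) (S : Finset α) (a : α) : Finset α :=
  S.filter (fun v => Reach c τ S a v)

lemma comp_module (hsym : ∀ u v, c u v = c v u) (hnr : NoRainbowOn c S)
    (ha : a ∈ S) : ModuleOn c S (comp c τ S a) := by
  classical
  constructor
  · intro v hv; exact (Finset.mem_filter.mp (by simpa [comp] using hv)).1
  · intro z hz hznot u hu v hv
    simp only [comp, Finset.mem_filter] at hu hv hznot
    have hzr : ¬ Reach c τ S a z := fun h => hznot ⟨hz, h⟩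
    have key : ∀ w, Reach c τ S a w → c z w = c z a := by
      intro w hw
      induction hw with
      | refl => rfl
      | @tail b w hab hbw ih =>
        have hbS : b = a ∨ b ∈ S := reach_mem hab
        have hbz : b ≠ z := by rintro rfl; exact hzr hab
        have hwz : w ≠ z := by
          rintro rfl; exact hzr (hab.tail hbw)
        have hcbz : c b z ≠ τ := by
          intro h
          exact hzr (hab.tail ⟨hz, hbz, h⟩)
        have hcwz : c w z ≠ τ := by
          intro h
          exact hzr ((hab.tail hbw).tail ⟨hz, hwz, h⟩)
        have htri : TriOK c b w z := by
          rcases hbS with rfl | hbS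
          · exact hnr b ha w hbw.1 z hz
          · exact hnr b hbS w hbw.1 z hz
        rcases htri with h | h | h
        · exact absurd (hbw.2.2 ▸ h.symm) hcbz
        · exact absurd (hbw.2.2 ▸ h.symm) hcwz
        · rw [hsym z w, ← h, hsym b z, ih]
    rw [key u hu.2, key v hv.2]

lemma sees_color (hsym : ∀ u v, c u v = c v u) (hnr : NoRainbowOn c S)
    (hnm : ∀ X, X ⊆ S → 2 ≤ X.card → X ≠ S → ¬ ModuleOn c S X)
    {γ : ℕ} {a b : α} (ha : a ∈ S) (hb : b ∈ S) (hab : a ≠ b) (hcab : c a b = γ)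
    {z : α} (hz : z ∈ S) : ∃ w ∈ S, w ≠ z ∧ c z w = γ := by
  classical
  have haF : a ∈ comp c γ S a := Finset.mem_filter.mpr ⟨ha, Relation.ReflTransGen.refl⟩
  have hbF : b ∈ comp c γ S a :=
    Finset.mem_filter.mpr ⟨hb, Relation.ReflTransGen.single ⟨hb, hab, hcab⟩⟩
  have hcard : 2 ≤ (comp c γ S a).card := by
    apply Finset.one_lt_card.mpr ⟨a, haF, b, hbF, hab⟩
  have hsub : comp c γ S a ⊆ S := fun v hv => (Finset.mem_filter.mp hv).1
  have hFS : comp c γ S a = S := by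
    by_contra hne
    exact hnm _ hsub hcard hne (comp_module hsym hnr ha)
  have hzF : z ∈ comp c γ S a := by rw [hFS]; exact hz
  have hreach : Reach c γ S a z := (Finset.mem_filter.mp hzF).2
  rcases Relation.ReflTransGen.cases_tail hreach with h | ⟨w, hw, hstep⟩
  · subst h
    exact ⟨b, hb, hab.symm, hcab⟩
  · have hwS : w = a ∨ w ∈ S := reach_mem hw
    refine ⟨w, ?_, ⟨hstep.2.1, by rw [hsym, hstep.2.2]⟩⟩
    rcases hwS with rfl | h
    · exact ha
    · exact h

/-- A Gallai partition of `S`. -/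
structure IsGP (c : α → α → ℕ) (S : Finset α) (parts : Finset (Finset α))
    (Q : Finset ℕ) : Prop where
  cover : parts.biUnion id = S
  npty : ∀ P ∈ parts, P.Nonempty
  disj : ∀ P ∈ parts, ∀ R ∈ parts, P ≠ R → Disjoint P R
  mono : ∀ P ∈ parts, ∀ R ∈ parts, P ≠ R →
    ∀ u ∈ P, ∀ v ∈ R, ∀ u' ∈ P, ∀ v' ∈ R, c u v = c u' v'
  crossQ : ∀ P ∈ parts, ∀ R ∈ parts, P ≠ R → ∀ u ∈ P, ∀ v ∈ R, c u v ∈ Q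
  Qcard : Q.card ≤ 2

lemma IsGP.part_subset {parts : Finset (Finset α)} {Q : Finset ℕ}
    (h : IsGP c S parts Q) {P : Finset α} (hP : P ∈ parts) : P ⊆ S := by
  intro v hv
  rw [← h.cover]
  exact Finset.mem_biUnion.mpr ⟨P, hP, hv⟩

lemma card_ge_three_of_used (hsym : ∀ u v, c u v = c v u)
    (h : 3 ≤ (usedOn c S).card) : 3 ≤ S.card := by
  by_contra hlt
  push_neg at hlt
  have h2 : ∃ γ₁ ∈ usedOn c S, ∃ γ₂ ∈ usedOn c S, γ₁ ≠ γ₂ := by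
    obtain ⟨γ₁, h1⟩ := Finset.card_pos.mp (by omega : 0 < (usedOn c S).card)
    obtain ⟨γ₂, h2, hne⟩ := Finset.exists_mem_ne (s := usedOn c S) (by omega) γ₁
    exact ⟨γ₁, h1, γ₂, h2, hne.symm⟩
  obtain ⟨γ₁, hγ₁, γ₂, hγ₂, hne⟩ := h2
  obtain ⟨u₁, hu₁, v₁, hv₁, huv₁, he₁⟩ := usedOn_exists hγ₁
  obtain ⟨u₂, hu₂, v₂, hv₂, huv₂, he₂⟩ := usedOn_exists hγ₂
  have hSeq : S = {u₁, v₁} := by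
    apply (Finset.eq_of_subset_of_card_le ?_ ?_).symm
    · intro w hw
      simp only [Finset.mem_insert, Finset.mem_singleton] at hw
      rcases hw with rfl | rfl <;> assumption
    · calc S.card ≤ 2 := by omega
        _ = ({u₁, v₁} : Finset α).card := by rw [Finset.card_insert_of_notMem (by simp [huv₁]), Finset.card_singleton]
  rw [hSeq] at hu₂ hv₂
  simp only [Finset.mem_insert, Finset.mem_singleton] at hu₂ hv₂
  rcases hu₂ with rfl | rfl <;> rcases hv₂ with rfl | rfl
  · exact huv₂ rfl
  · exact hne (he₁ ▸ he₂ ▸ rfl)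
  · rw [← he₁, ← he₂, hsym] at hne; exact hne rfl
  · exact huv₂ rfl

variable {c : α → α → ℕ} {S : Finset α}

lemma exists_module (hsym : ∀ u v, c u v = c v u) (hnr : NoRainbowOn c S)
    (hused : 3 ≤ (usedOn c S).card)
    (hG : ∀ S' : Finset α, S'.card < S.card → 2 ≤ S'.card → NoRainbowOn c S' →
      ∃ parts Q, IsGP c S' parts Q ∧ 2 ≤ parts.card) :
    ∃ X, X ⊆ S ∧ 2 ≤ X.card ∧ X ≠ S ∧ ModuleOn c S X := by
  classical
  by_contra hcon
  push_neg at hcon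
  have hseen : ∀ γ ∈ usedOn c S, ∀ z ∈ S, ∃ w ∈ S, w ≠ z ∧ c z w = γ := by
    intro γ hγ z hz
    obtain ⟨a, ha, b, hb, hab, he⟩ := usedOn_exists hγ
    exact sees_color hsym hnr hcon ha hb hab he hz
  have hS3 : 3 ≤ S.card := card_ge_three_of_used hsym hused
  obtain ⟨x, hx⟩ : S.Nonempty := Finset.card_pos.mp (by omega)
  set T := S.erase x with hTdef
  have hTsub : T ⊆ S := Finset.erase_subset _ _
  have hxT : x ∉ T := Finset.notMem_erase _ _
  have hTcard : T.card = S.card - 1 := Finset.card_erase_of_mem hx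
  have hT2 : 2 ≤ T.card := by omega
  have hnrT : NoRainbowOn c T := fun u hu v hv w hw =>
    hnr u (hTsub hu) v (hTsub hv) w (hTsub hw)
  have hmemT : ∀ w, w ∈ T ↔ (w ∈ S ∧ w ≠ x) := by
    intro w; rw [hTdef, Finset.mem_erase]; tauto
  by_cases h3T : 3 ≤ (usedOn c T).card
  case neg =>
    push_neg at h3T
    have himg : usedOn c S ⊆ (usedOn c T) ∪ (T.image (c x)) := by
      intro γ hγ
      obtain ⟨u, hu, v, hv, huv, he⟩ := usedOn_exists hγ
      rcases eq_or_ne u x with rfl | hux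
      · have hvT : v ∈ T := (hmemT v).mpr ⟨hv, fun h => huv h.symm⟩
        exact Finset.mem_union_right _ (Finset.mem_image.mpr ⟨v, hvT, he⟩)
      rcases eq_or_ne v x with rfl | hvx
      · have huT : u ∈ T := (hmemT u).mpr ⟨hu, huv⟩
        exact Finset.mem_union_right _ (Finset.mem_image.mpr ⟨u, huT, by rw [← hsym, he]⟩)
      · exact Finset.mem_union_left _
          (he ▸ mem_usedOn ((hmemT u).mpr ⟨hu, hux⟩) ((hmemT v).mpr ⟨hv, hvx⟩) huv)
    have hexτ : ∃ τ ∈ T.image (c x), τ ∉ usedOn c T := by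
      by_contra hno
      push_neg at hno
      have hsub2 : usedOn c S ⊆ usedOn c T := by
        intro γ hγ
        rcases Finset.mem_union.mp (himg hγ) with h | h
        · exact h
        · exact hno γ h
      have := Finset.card_le_card hsub2
      omega
    obtain ⟨τ, hτim, hτnot⟩ := hexτ
    set N := T.filter (fun w => c x w = τ) with hNdef
    obtain ⟨w₀, hw₀T, hw₀c⟩ : ∃ w ∈ T, c x w = τ := by
      obtain ⟨w, hw, he⟩ := Finset.mem_image.mp hτim; exact ⟨w, hw, he⟩
    have hw₀N : w₀ ∈ N := Finset.mem_filter.mpr ⟨hw₀T, hw₀c⟩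
    set X := insert x N with hXdef
    have hNsub : N ⊆ T := Finset.filter_subset _ _
    have hXsub : X ⊆ S := by
      intro w hw
      rcases Finset.mem_insert.mp hw with rfl | h
      · exact hx
      · exact hTsub (hNsub h)
    have hXcard : 2 ≤ X.card := by
      apply Finset.one_lt_card.mpr
      exact ⟨x, Finset.mem_insert_self _ _, w₀, Finset.mem_insert_of_mem hw₀N,
        fun h => hxT (h ▸ hNsub hw₀N)⟩
    have hkey : ∀ z ∈ S, z ∉ X → ∀ u ∈ X, c z u = c z x := by
      intro z hz hzX u hu
      rcases Finset.mem_insert.mp hu with rfl | huN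
      · rfl
      · have huT := (Finset.mem_filter.mp huN).1
        have huc := (Finset.mem_filter.mp huN).2
        have hzx : z ≠ x := fun h => hzX (h ▸ Finset.mem_insert_self _ _)
        have hzT : z ∈ T := (hmemT z).mpr ⟨hz, hzx⟩
        have hzu : z ≠ u := fun h => hzX (h ▸ hu)
        have hτz : c x z ≠ τ := fun h =>
          hzX (Finset.mem_insert.mpr (Or.inr (Finset.mem_filter.mpr ⟨hzT, h⟩)))
        have hτuz : c u z ≠ τ := fun h =>
          hτnot (h ▸ mem_usedOn huT hzT (fun h2 => hzu h2.symm))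
        rcases hnr x hx u (hTsub huT) z hz with h | h | h
        · rw [huc] at h; exact absurd h.symm hτz
        · rw [huc] at h; exact absurd h.symm hτuz
        · rw [hsym z u, ← h, hsym x z]
    have hXmod : ModuleOn c S X :=
      ⟨hXsub, fun z hz hzX u hu v hv => by
        rw [hkey z hz hzX u hu, hkey z hz hzX v hv]⟩
    by_cases hXS : X = S
    · have hNT : ∀ w ∈ T, c x w = τ := by
        intro w hw
        have hwX : w ∈ X := by rw [hXS]; exact hTsub hw
        rcases Finset.mem_insert.mp hwX with rfl | hN
        · exact absurd hw hxT
        · exact (Finset.mem_filter.mp hN).2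
      have hTmod : ModuleOn c S T := by
        refine ⟨hTsub, ?_⟩
        intro z hz hzT u hu v hv
        have hzx : z = x := by
          by_contra h
          exact hzT ((hmemT z).mpr ⟨hz, h⟩)
        subst hzx
        rw [hNT u hu, hNT v hv]
      exact hcon T hTsub (by omega) (fun h => hxT (h ▸ hx)) hTmod
    · exact hcon X hXsub hXcard hXS hXmod
  case pos =>
    obtain ⟨parts, Q, hgp, hm2⟩ := hG T (by omega) hT2 hnrT
    have hpartsub : ∀ P ∈ parts, P ⊆ T := fun P hP => hgp.part_subset hP
    have hpartof : ∀ w ∈ T, ∃ P ∈ parts, w ∈ P := by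
      intro w hw
      rw [← hgp.cover] at hw
      obtain ⟨P, hP, hwP⟩ := Finset.mem_biUnion.mp hw
      exact ⟨P, hP, hwP⟩
    have hSmem : ∀ {P : Finset α}, P ∈ parts → ∀ {w : α}, w ∈ P → w ∈ S := by
      intro P hP w hw
      exact hTsub (hpartsub _ hP hw)
    -- Step 4A: the workhorse triangle lemma.
    have step4A : ∀ P ∈ parts, ∀ R ∈ parts, P ≠ R → ∀ u ∈ P, ∀ u' ∈ P,
        c x u ≠ c x u' → ∀ w ∈ R, c u w ≠ c x u → c u w ≠ c x u' → c x w = c u w := by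
      intro P hP R hR hPR u hu u' hu' hne w hw hγε hγδ
      have hm : c u w = c u' w := hgp.mono P hP R hR hPR u hu w hw u' hu' w hw
      have t1 := hnr x hx u (hSmem hP hu) w (hSmem hR hw)
      have t2 := hnr x hx u' (hSmem hP hu') w (hSmem hR hw)
      unfold TriOK at t1 t2
      rw [← hm] at t2
      rcases t1 with h | h | h
      · rcases t2 with h' | h' | h'
        · exact absurd (h.trans h'.symm) hne
        · exact absurd h'.symm hγδ
        · exact h'
      · exact absurd h.symm hγε
      · exact h
    have step4B : ∀ P ∈ parts, ∀ R ∈ parts, P ≠ R → ∀ u ∈ P, ∀ u' ∈ P,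
        c x u ≠ c x u' → ∀ w ∈ R,
        c x w = c u w ∨ c x w = c x u ∨ c x w = c x u' := by
      intro P hP R hR hPR u hu u' hu' hne w hw
      have hm : c u w = c u' w := hgp.mono P hP R hR hPR u hu w hw u' hu' w hw
      have t1 := hnr x hx u (hSmem hP hu) w (hSmem hR hw)
      have t2 := hnr x hx u' (hSmem hP hu') w (hSmem hR hw)
      unfold TriOK at t1 t2
      rw [← hm] at t2
      rcases t1 with h | h | h
      · exact Or.inr (Or.inl h.symm)
      · rcases t2 with h' | h' | h'
        · exact Or.inr (Or.inr h'.symm)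
        · exact absurd (h.trans h'.symm) hne
        · exact Or.inl h'
      · exact Or.inl h
    -- Step 3: nonsingleton parts see at least two colors from x.
    have step3 : ∀ P ∈ parts, 2 ≤ P.card → ∃ u ∈ P, ∃ u' ∈ P, c x u ≠ c x u' := by
      intro P hP hP2
      by_contra hno
      push_neg at hno
      have hPmod : ModuleOn c S P := by
        refine ⟨fun w hw => hSmem hP hw, ?_⟩
        intro z hz hzP u hu v hv
        rcases eq_or_ne z x with rfl | hzx
        · exact hno u hu v hv
        · have hzT : z ∈ T := (hmemT z).mpr ⟨hz, hzx⟩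
          obtain ⟨R, hR, hzR⟩ := hpartof z hzT
          have hRP : P ≠ R := fun h => hzP (h ▸ hzR)
          have := hgp.mono P hP R hR hRP u hu z hzR v hv z hzR
          rw [hsym z u, hsym z v]
          exact this
      have hPS : P ≠ S := fun h => hxT (hpartsub P hP (by rw [h]; exact hx))
      exact hcon P (fun w hw => hSmem hP hw) hP2 hPS hPmod
    -- helper: if x agrees with a part on everything outside, we get a module.
    have magree : ∀ P ∈ parts,
        (∀ R ∈ parts, R ≠ P → ∀ w ∈ R, ∀ u ∈ P, c x w = c u w) → False := by
      intro P hP hagr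
      have hmod : ModuleOn c S (insert x P) := by
        refine ⟨?_, ?_⟩
        · intro w hw
          rcases Finset.mem_insert.mp hw with rfl | h
          · exact hx
          · exact hSmem hP h
        · intro z hz hzX u hu v hv
          have hzx : z ≠ x := fun h => hzX (h ▸ Finset.mem_insert_self _ _)
          have hzT : z ∈ T := (hmemT z).mpr ⟨hz, hzx⟩
          obtain ⟨R, hR, hzR⟩ := hpartof z hzT
          have hRP : R ≠ P := fun h => hzX (Finset.mem_insert_of_mem (h ▸ hzR))
          have key : ∀ a ∈ insert x P, c z a = c z x := by
            intro a ha
            rcases Finset.mem_insert.mp ha with rfl | haP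
            · rfl
            · have h1 : c x z = c a z := hagr R hR hRP z hzR a haP
              rw [hsym z a, ← h1, hsym x z]
          rw [key u hu, key v hv]
      have hcard2 : 2 ≤ (insert x P).card := by
        obtain ⟨p, hp⟩ := hgp.npty P hP
        exact Finset.one_lt_card.mpr ⟨x, Finset.mem_insert_self _ _, p,
          Finset.mem_insert_of_mem hp, fun h => hxT (h ▸ hpartsub P hP hp)⟩
      have hneS : insert x P ≠ S := by
        obtain ⟨R, hR, hRP⟩ := Finset.exists_mem_ne (s := parts) (by omega) P
        obtain ⟨r, hr⟩ := hgp.npty R hR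
        intro h
        have hrS : r ∈ S := hSmem hR hr
        rw [← h] at hrS
        rcases Finset.mem_insert.mp hrS with rfl | hrP
        · exact hxT (hpartsub R hR hr)
        · exact (Finset.disjoint_left.mp (hgp.disj R hR P hP hRP) hr) hrP
      exact hcon _ hmod.1 hcard2 hneS hmod
    -- Step 3': at most two x-colors on each part.
    have step3' : ∀ P ∈ parts, ∀ u ∈ P, ∀ u' ∈ P, c x u ≠ c x u' →
        ∀ u'' ∈ P, c x u'' = c x u ∨ c x u'' = c x u' := by
      intro P hP u hu u' hu' hne u'' hu''
      by_contra hno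
      push_neg at hno
      obtain ⟨h1, h2⟩ := hno
      apply magree P hP
      intro R hR hRP w hw a haP
      have hmono_ua : c u w = c a w :=
        hgp.mono P hP R hR (Ne.symm hRP) u hu w hw a haP w hw
      suffices h : c x w = c u w by rw [h, hmono_ua]
      have hmono_uu' : c u w = c u' w :=
        hgp.mono P hP R hR (Ne.symm hRP) u hu w hw u' hu' w hw
      have hmono_uu'' : c u w = c u'' w :=
        hgp.mono P hP R hR (Ne.symm hRP) u hu w hw u'' hu'' w hw
      by_cases hγε : c u w = c x u
      · have h4 := step4A P hP R hR (Ne.symm hRP) u' hu' u'' hu''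
          (fun h => h2 h.symm) w hw
          (by rw [← hmono_uu', hγε]; exact hne)
          (by rw [← hmono_uu', hγε]; exact fun h => h1 h.symm)
        rw [h4, ← hmono_uu']
      · by_cases hγδ : c u w = c x u'
        · have h4 := step4A P hP R hR (Ne.symm hRP) u hu u'' hu'' h1.symm w hw
            hγε (by rw [hγδ]; exact fun h => h2 h.symm)
          rw [h4]
        · exact step4A P hP R hR (Ne.symm hRP) u hu u' hu' hne w hw hγε hγδ
    -- Step 5: not both x-colors in Q.
    have step5 : ∀ P ∈ parts, ∀ u ∈ P, ∀ u' ∈ P, c x u ≠ c x u' →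
        ¬(c x u ∈ Q ∧ c x u' ∈ Q) := by
      rintro P hP u hu u' hu' hne ⟨hQ1, hQ2⟩
      have hall : ∀ w ∈ T, c x w ∈ Q := by
        intro w hw
        obtain ⟨R, hR, hwR⟩ := hpartof w hw
        rcases eq_or_ne R P with rfl | hRP
        · rcases step3' R hR u hu u' hu' hne w hwR with h | h
          · rw [h]; exact hQ1
          · rw [h]; exact hQ2
        · rcases step4B P hP R hR (Ne.symm hRP) u hu u' hu' hne w hwR with h | h | h
          · rw [h]; exact hgp.crossQ P hP R hR (Ne.symm hRP) u hu w hwR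
          · rw [h]; exact hQ1
          · rw [h]; exact hQ2
      have hout : ∃ η ∈ usedOn c S, η ∉ Q := by
        by_contra hno
        push_neg at hno
        have hsub : usedOn c S ⊆ Q := fun η hη => hno η hη
        have := Finset.card_le_card hsub
        have := hgp.Qcard
        omega
      obtain ⟨η, hη, hηQ⟩ := hout
      obtain ⟨w, hwS, hwx, hcw⟩ := hseen η hη x hx
      exact hηQ (hcw ▸ hall w ((hmemT w).mpr ⟨hwS, hwx⟩))
    -- Step 6: not both x-colors outside Q.
    have step6 : ∀ P ∈ parts, ∀ u ∈ P, ∀ u' ∈ P, c x u ≠ c x u' →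
        ¬(c x u ∉ Q ∧ c x u' ∉ Q) := by
      rintro P hP u hu u' hu' hne ⟨hQ1, hQ2⟩
      apply magree P hP
      intro R hR hRP w hw a haP
      have hγQ : c u w ∈ Q := hgp.crossQ P hP R hR (Ne.symm hRP) u hu w hw
      have h4 := step4A P hP R hR (Ne.symm hRP) u hu u' hu' hne w hw
        (fun h => hQ1 (h ▸ hγQ)) (fun h => hQ2 (h ▸ hγQ))
      rw [h4]
      exact hgp.mono P hP R hR (Ne.symm hRP) u hu w hw a haP w hw
    -- each nonsingleton part has exactly one x-color in Q and one outside.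
    have hpair : ∀ P ∈ parts, 2 ≤ P.card →
        ∃ u ∈ P, ∃ u' ∈ P, c x u ≠ c x u' ∧ c x u ∉ Q ∧ c x u' ∈ Q := by
      intro P hP hP2
      obtain ⟨u, hu, u', hu', hne⟩ := step3 P hP hP2
      by_cases h : c x u ∈ Q
      · have h2 : c x u' ∉ Q := fun h' => step5 P hP u hu u' hu' hne ⟨h, h'⟩
        exact ⟨u', hu', u, hu, hne.symm, h2, h⟩
      · have h2 : c x u' ∈ Q := by
          by_contra h'
          exact step6 P hP u hu u' hu' hne ⟨h, h'⟩
        exact ⟨u, hu, u', hu', hne, h, h2⟩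
    -- Step 7: singleton parts.
    have step7 : ∀ P ∈ parts, P.card < 2 → ∀ s ∈ P,
        c x s ∉ Q ∧ Q.card = 2 ∧ usedOn c S = Q ∪ {c x s} := by
      intro P hP hP1 s hs
      have hsT : s ∈ T := hpartsub P hP hs
      have hsS : s ∈ S := hTsub hsT
      have husub : usedOn c S ⊆ Q ∪ {c x s} := by
        intro η hη
        obtain ⟨w, hwS, hws, hcw⟩ := hseen η hη s hsS
        rcases eq_or_ne w x with rfl | hwx
        · exact Finset.mem_union_right _
            (Finset.mem_singleton.mpr (by rw [← hcw, hsym]))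
        · have hwT : w ∈ T := (hmemT w).mpr ⟨hwS, hwx⟩
          obtain ⟨R, hR, hwR⟩ := hpartof w hwT
          have hRP : P ≠ R := by
            intro h
            subst h
            have : 2 ≤ P.card := Finset.one_lt_card.mpr ⟨s, hs, w, hwR, fun h => hws h.symm⟩
            omega
          exact Finset.mem_union_left _ (hcw ▸ hgp.crossQ P hP R hR hRP s hs w hwR)
      have hc3 : 3 ≤ (Q ∪ {c x s}).card := le_trans hused (Finset.card_le_card husub)
      have hcQ : Q.card ≤ 2 := hgp.Qcard
      have hcu : (Q ∪ {c x s}).card ≤ Q.card + 1 :=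
        le_trans (Finset.card_union_le _ _) (by simp)
      have hxsQ : c x s ∉ Q := by
        intro h
        have heq : Q ∪ {c x s} = Q := Finset.union_eq_left.mpr (by simp [h])
        rw [heq] at hc3
        omega
      refine ⟨hxsQ, by omega, ?_⟩
      exact Finset.eq_of_subset_of_card_le husub (by omega)
    -- main split
    by_cases hexNS : ∃ P ∈ parts, 2 ≤ P.card
    case neg =>
      push_neg at hexNS
      have hsubQ : usedOn c T ⊆ Q := by
        intro γ hγ
        obtain ⟨u, hu, v, hv, huv, he⟩ := usedOn_exists hγ
        obtain ⟨P, hP, huP⟩ := hpartof u hu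
        obtain ⟨R, hR, hvR⟩ := hpartof v hv
        have hPR : P ≠ R := by
          intro h
          subst h
          have h2 : 2 ≤ P.card := Finset.one_lt_card.mpr ⟨u, huP, v, hvR, huv⟩
          have := hexNS P hP
          omega
        exact he ▸ hgp.crossQ P hP R hR hPR u huP v hvR
      have := Finset.card_le_card hsubQ
      have := hgp.Qcard
      omega
    case pos =>
      obtain ⟨P₀, hP₀, hP₀2⟩ := hexNS
      obtain ⟨u₀, hu₀, u₀', hu₀', hne₀, hε₀, hq₀⟩ := hpair P₀ hP₀ hP₀2
      -- Step 8
      have step8 : ∀ P ∈ parts, ∀ u ∈ P, ∀ u' ∈ P, c x u ≠ c x u' → c x u ∉ Q →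
          c x u' ∈ Q → ∀ R ∈ parts, R ≠ P → ∀ w ∈ R, c u w = c x u' := by
        intro P hP u hu u' hu' hne hεQ hδQ R hR hRP w hw
        by_contra hG2
        have hγQ : c u w ∈ Q := hgp.crossQ P hP R hR (Ne.symm hRP) u hu w hw
        have h4 : ∀ v ∈ R, c x v = c u w := by
          intro v hv
          have hmono2 : c u v = c u w :=
            hgp.mono P hP R hR (Ne.symm hRP) u hu v hv u hu w hw
          have h5 := step4A P hP R hR (Ne.symm hRP) u hu u' hu' hne v hv
            (by rw [hmono2]; exact fun h => hεQ (h ▸ hγQ))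
            (by rw [hmono2]; exact hG2)
          rw [h5, hmono2]
        by_cases hR2 : 2 ≤ R.card
        · obtain ⟨v, hv, v', hv', hnev⟩ := step3 R hR hR2
          exact hnev ((h4 v hv).trans (h4 v' hv').symm)
        · have hout := (step7 R hR (by omega) w hw).1
          exact hout ((h4 w hw) ▸ hγQ)
      have hq_cross : ∀ R ∈ parts, R ≠ P₀ → ∀ w ∈ R, c u₀ w = c x u₀' :=
        step8 P₀ hP₀ u₀ hu₀ u₀' hu₀' hne₀ hε₀ hq₀
      by_cases hsing : ∃ P ∈ parts, P.card < 2
      · obtain ⟨Ps, hPs, hPs1⟩ := hsing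
        obtain ⟨s, hs⟩ := hgp.npty Ps hPs
        obtain ⟨hxsQ, hQ2, hueq⟩ := step7 Ps hPs hPs1 s hs
        obtain ⟨qb, hqbQ, hqbne⟩ :=
          Finset.exists_mem_ne (s := Q) (by omega) (c x u₀')
        have hqbused : qb ∈ usedOn c S := by
          rw [hueq]; exact Finset.mem_union_left _ hqbQ
        obtain ⟨w, hwS, hwx, hcw⟩ := hseen qb hqbused x hx
        have hwT : w ∈ T := (hmemT w).mpr ⟨hwS, hwx⟩
        obtain ⟨R, hR, hwR⟩ := hpartof w hwT
        by_cases hR2 : 2 ≤ R.card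
        · rcases eq_or_ne R P₀ with rfl | hRP₀
          · rcases step3' R hR u₀ hu₀ u₀' hu₀' hne₀ w hwR with h | h
            · exact hε₀ (by rw [← h, hcw]; exact hqbQ)
            · exact hqbne (by rw [← hcw, h])
          · obtain ⟨v, hv, v', hv', hnev, hεR, hqR⟩ := hpair R hR hR2
            have hqReq : c x v' = c x u₀' := by
              have h1 : c v u₀ = c x v' :=
                step8 R hR v hv v' hv' hnev hεR hqR P₀ hP₀ (Ne.symm hRP₀) u₀ hu₀
              have h2 : c u₀ v = c x u₀' := hq_cross R hR hRP₀ v hv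
              rw [← h1, hsym, h2]
            rcases step3' R hR v hv v' hv' hnev w hwR with h | h
            · exact hεR (by rw [← h, hcw]; exact hqbQ)
            · exact hqbne (by rw [← hcw, h, hqReq])
        · have hout := (step7 R hR (by omega) w hwR).1
          exact hout (hcw ▸ hqbQ)
      · push_neg at hsing
        have hsing2 : ∀ P ∈ parts, 2 ≤ P.card := hsing
        -- x-Q-color of every nonsingleton part equals q := c x u₀'.
        have hqPeq : ∀ P ∈ parts, ∀ v ∈ P, ∀ v' ∈ P, c x v ≠ c x v' → c x v ∉ Q →
            c x v' ∈ Q → c x v' = c x u₀' := by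
          intro P hP v hv v' hv' hnev hεP hqP
          rcases eq_or_ne P P₀ with rfl | hPne
          · rcases step3' P hP u₀ hu₀ u₀' hu₀' hne₀ v' hv' with h | h
            · rw [h] at hqP; exact absurd hqP hε₀
            · exact h
          · have h1 : c v u₀ = c x v' :=
              step8 P hP v hv v' hv' hnev hεP hqP P₀ hP₀ (Ne.symm hPne) u₀ hu₀
            have h2 : c u₀ v = c x u₀' := hq_cross P hP hPne v hv
            rw [← h1, hsym, h2]
        have hcrossq : ∀ P ∈ parts, ∀ R ∈ parts, P ≠ R → ∀ u ∈ P, ∀ w ∈ R,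
            c u w = c x u₀' := by
          intro P hP R hR hPR u hu w hw
          rcases eq_or_ne P P₀ with rfl | hPne
          · have hm : c u w = c u₀ w := hgp.mono P hP R hR hPR u hu w hw u₀ hu₀ w hw
            rw [hm]
            exact hq_cross R hR (Ne.symm hPR) w hw
          · obtain ⟨v, hv, v', hv', hnev, hεP, hqP⟩ := hpair P hP (hsing2 P hP)
            have hqPq : c x v' = c x u₀' := hqPeq P hP v hv v' hv' hnev hεP hqP
            have h3 : c v w = c x v' :=
              step8 P hP v hv v' hv' hnev hεP hqP R hR (Ne.symm hPR) w hw
            have hm : c u w = c v w := hgp.mono P hP R hR hPR u hu w hw v hv w hw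
            rw [hm, h3, hqPq]
        have hτQ : c x u₀ ∉ Q := hε₀
        have hτq : c x u₀ ≠ c x u₀' := hne₀
        have hcolors : ∀ w ∈ T, c x w = c x u₀' ∨ c x w = c x u₀ := by
          intro w hw
          obtain ⟨P, hP, hwP⟩ := hpartof w hw
          obtain ⟨v, hv, v', hv', hnev, hεP, hqP⟩ := hpair P hP (hsing2 P hP)
          have hqPq : c x v' = c x u₀' := hqPeq P hP v hv v' hv' hnev hεP hqP
          have hεPτ : c x v = c x u₀ := by
            by_contra hne2
            have hu₀S : u₀ ∈ S := hSmem hP₀ hu₀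
            have hu₀x : u₀ ≠ x := fun h => hxT (h ▸ hpartsub P₀ hP₀ hu₀)
            have hcompS : comp c (c x u₀) S x = S := by
              by_contra hne3
              have hxc : x ∈ comp c (c x u₀) S x :=
                Finset.mem_filter.mpr ⟨hx, Relation.ReflTransGen.refl⟩
              have hu₀c : u₀ ∈ comp c (c x u₀) S x :=
                Finset.mem_filter.mpr ⟨hu₀S,
                  Relation.ReflTransGen.single ⟨hu₀S, fun h => hu₀x h.symm, rfl⟩⟩
              exact hcon _ (fun y hy => (Finset.mem_filter.mp hy).1)
                (Finset.one_lt_card.mpr ⟨x, hxc, u₀, hu₀c, fun h => hu₀x h.symm⟩)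
                hne3 (comp_module hsym hnr hx)
            have hvS : v ∈ S := hSmem hP hv
            have hreach : Reach c (c x u₀) S x v := by
              have : v ∈ comp c (c x u₀) S x := by rw [hcompS]; exact hvS
              exact (Finset.mem_filter.mp this).2
            have hinv : ∀ y, Reach c (c x u₀) S x y → y ∉ P := by
              intro y hy
              induction hy with
              | refl => exact fun h => hxT (hpartsub P hP h)
              | @tail b y hab hby ih =>
                intro hyP
                rcases eq_or_ne b x with rfl | hbx
                · rcases step3' P hP v hv v' hv' hnev y hyP with h | h
                  · exact hne2 (h.symm.trans hby.2.2)
                  · exact hτq ((h.symm.trans hby.2.2).symm.trans hqPq)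
                · have hbS : b ∈ S := by
                    rcases reach_mem hab with h | h
                    · exact absurd h hbx
                    · exact h
                  have hbT : b ∈ T := (hmemT b).mpr ⟨hbS, hbx⟩
                  obtain ⟨Rb, hRb, hbRb⟩ := hpartof b hbT
                  have hRbP : Rb ≠ P := fun h => ih (h ▸ hbRb)
                  have hq2 := hcrossq Rb hRb P hP hRbP b hbRb y hyP
                  exact hτq (hby.2.2.symm.trans hq2)
            exact hinv v hreach hv
          rcases step3' P hP v hv v' hv' hnev w hwP with h | h
          · exact Or.inr (h.trans hεPτ)
          · exact Or.inl (h.trans hqPq)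
        have hbig : ∃ η ∈ usedOn c S, η ∉ ({c x u₀', c x u₀} : Finset ℕ) := by
          by_contra hno
          push_neg at hno
          have hsub : usedOn c S ⊆ {c x u₀', c x u₀} := fun η hη => hno η hη
          have h1 := Finset.card_le_card hsub
          have h2 : ({c x u₀', c x u₀} : Finset ℕ).card ≤ 2 :=
            Finset.card_insert_le _ _ |>.trans (by simp)
          omega
        obtain ⟨η, hη, hηno⟩ := hbig
        obtain ⟨w, hwS, hwx, hcw⟩ := hseen η hη x hx
        have hwT : w ∈ T := (hmemT w).mpr ⟨hwS, hwx⟩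
        rcases hcolors w hwT with h | h
        · exact hηno (by rw [← hcw, h]; exact Finset.mem_insert_self _ _)
        · exact hηno (by
            rw [← hcw, h]
            exact Finset.mem_insert_of_mem (Finset.mem_singleton_self _))

theorem gallai_partition_s19 (hsym : ∀ u v, c u v = c v u) :
    ∀ (n : ℕ) (S : Finset α), S.card = n → 2 ≤ S.card → NoRainbowOn c S →
      ∃ parts Q, IsGP c S parts Q ∧ 2 ≤ parts.card := by
  intro n
  induction n using Nat.strong_induction_on with
  | _ n IH =>
  intro S hcard h2 hnr
  subst hcard
  by_cases hu : 3 ≤ (usedOn c S).card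
  · obtain ⟨X, hXsub, hX2, hXne, hXmod⟩ := exists_module hsym hnr hu
      (fun S' hlt h2' hnr' => IH S'.card hlt S' rfl h2' hnr')
    obtain ⟨x₀, hx₀X⟩ : X.Nonempty := Finset.card_pos.mp (by omega)
    set S' := insert x₀ (S \ X) with hS'def
    have hx₀S : x₀ ∈ S := hXsub hx₀X
    have hS'sub : S' ⊆ S := by
      intro w hw
      rcases Finset.mem_insert.mp hw with rfl | h
      · exact hx₀S
      · exact (Finset.mem_sdiff.mp h).1
    have hx₀nd : x₀ ∉ S \ X := fun h => (Finset.mem_sdiff.mp h).2 hx₀X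
    have hcard' : S'.card = S.card - X.card + 1 := by
      rw [hS'def, Finset.card_insert_of_notMem hx₀nd, Finset.card_sdiff_of_subset hXsub]
    have hXlt : X.card < S.card :=
      Finset.card_lt_card (Finset.ssubset_iff_subset_ne.mpr ⟨hXsub, hXne⟩)
    have h2' : 2 ≤ S'.card := by omega
    have hlt' : S'.card < S.card := by omega
    have hnr' : NoRainbowOn c S' := fun u hu v hv w hw =>
      hnr _ (hS'sub hu) _ (hS'sub hv) _ (hS'sub hw)
    obtain ⟨parts', Q', hgp', hm2'⟩ := IH S'.card hlt' S' rfl h2' hnr'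
    have hx₀S' : x₀ ∈ S' := Finset.mem_insert_self _ _
    obtain ⟨P₀, hP₀, hx₀P₀⟩ : ∃ P ∈ parts', x₀ ∈ P := by
      rw [← hgp'.cover] at hx₀S'
      exact Finset.mem_biUnion.mp hx₀S'
    have hS'X : ∀ w ∈ S', w ∈ X → w = x₀ := by
      intro w hw hwX
      rcases Finset.mem_insert.mp hw with rfl | h
      · rfl
      · exact absurd hwX (Finset.mem_sdiff.mp h).2
    have hdisjRX : ∀ R ∈ parts', R ≠ P₀ → Disjoint R X := by
      intro R hR hRP
      rw [Finset.disjoint_left]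
      intro w hwR hwX
      have hwS' : w ∈ S' := hgp'.part_subset hR hwR
      have := hS'X w hwS' hwX
      subst this
      exact (Finset.disjoint_left.mp (hgp'.disj R hR P₀ hP₀ hRP) hwR) hx₀P₀
    have hmodX : ∀ z ∈ S, z ∉ X → ∀ u ∈ X, c z u = c z x₀ :=
      fun z hz hzX u hu => hXmod.2 z hz hzX u hu x₀ hx₀X
    -- the key agreement: vertices of P₀ ∪ X all look alike from other parts
    have hkey : ∀ R ∈ parts', R ≠ P₀ → ∀ v ∈ R, ∀ u ∈ P₀ ∪ X, c u v = c x₀ v := by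
      intro R hR hRP v hv u hu
      have hvS' : v ∈ S' := hgp'.part_subset hR hv
      rcases Finset.mem_union.mp hu with huP | huX
      · exact hgp'.mono P₀ hP₀ R hR (Ne.symm hRP) u huP v hv x₀ hx₀P₀ v hv
      · have hvX : v ∉ X := fun h => by
          have := hS'X v hvS' h
          subst this
          exact (Finset.disjoint_left.mp (hgp'.disj R hR P₀ hP₀ hRP) hv) hx₀P₀
        have := hmodX v (hS'sub hvS') hvX u huX
        rw [hsym u v, this, hsym v x₀]
    set parts := insert (P₀ ∪ X) (parts'.erase P₀) with hpdef
    have hnew : (P₀ ∪ X) ∉ parts'.erase P₀ := by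
      intro h
      have hne' := (Finset.mem_erase.mp h).1
      have hmem := (Finset.mem_erase.mp h).2
      have : x₀ ∈ P₀ ∪ X := Finset.mem_union_right _ hx₀X
      exact (Finset.disjoint_left.mp (hgp'.disj _ hmem P₀ hP₀ hne') this) hx₀P₀
    have hpartscard : parts.card = parts'.card := by
      rw [hpdef, Finset.card_insert_of_notMem hnew,
        Finset.card_erase_of_mem hP₀]
      have : 1 ≤ parts'.card := by omega
      omega
    have hsubS : ∀ P ∈ parts, P ⊆ S := by
      intro P hP
      rcases Finset.mem_insert.mp hP with rfl | h
      · exact Finset.union_subset ((hgp'.part_subset hP₀).trans hS'sub) hXsub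
      · exact ((hgp'.part_subset (Finset.mem_of_mem_erase h)).trans hS'sub)
    refine ⟨parts, Q', ⟨?_, ?_, ?_, ?_, ?_, hgp'.Qcard⟩, by omega⟩
    · -- cover
      apply Finset.Subset.antisymm
      · intro w hw
        obtain ⟨P, hP, hwP⟩ := Finset.mem_biUnion.mp hw
        exact hsubS P hP hwP
      · intro w hwS
        apply Finset.mem_biUnion.mpr
        by_cases hwX : w ∈ X
        · exact ⟨P₀ ∪ X, Finset.mem_insert_self _ _, Finset.mem_union_right _ hwX⟩
        · have hwS' : w ∈ S' := Finset.mem_insert_of_mem (Finset.mem_sdiff.mpr ⟨hwS, hwX⟩)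
          rw [← hgp'.cover] at hwS'
          obtain ⟨R, hR, hwR⟩ := Finset.mem_biUnion.mp hwS'
          rcases eq_or_ne R P₀ with rfl | hRP
          · exact ⟨R ∪ X, Finset.mem_insert_self _ _, Finset.mem_union_left _ hwR⟩
          · exact ⟨R, Finset.mem_insert_of_mem (Finset.mem_erase.mpr ⟨hRP, hR⟩), hwR⟩
    · -- nonempty
      intro P hP
      rcases Finset.mem_insert.mp hP with rfl | h
      · exact ⟨x₀, Finset.mem_union_right _ hx₀X⟩
      · exact hgp'.npty P (Finset.mem_of_mem_erase h)
    · -- disjoint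
      intro P hP R hR hPR
      rcases Finset.mem_insert.mp hP with rfl | hPe <;>
        rcases Finset.mem_insert.mp hR with h' | hRe
      · exact absurd h'.symm hPR
      · have hRmem := Finset.mem_of_mem_erase hRe
        have hRne := (Finset.mem_erase.mp hRe).1
        exact Finset.disjoint_union_left.mpr
          ⟨(hgp'.disj P₀ hP₀ R hRmem (Ne.symm hRne)),
            (hdisjRX R hRmem hRne).symm⟩
      · subst h'
        have hPmem := Finset.mem_of_mem_erase hPe
        have hPne := (Finset.mem_erase.mp hPe).1
        exact Finset.disjoint_union_right.mpr
          ⟨hgp'.disj P hPmem P₀ hP₀ hPne, hdisjRX P hPmem hPne⟩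
      · exact hgp'.disj P (Finset.mem_of_mem_erase hPe) R (Finset.mem_of_mem_erase hRe) hPR
    · -- mono
      intro P hP R hR hPR u hu v hv u' hu' v' hv'
      rcases Finset.mem_insert.mp hP with rfl | hPe <;>
        rcases Finset.mem_insert.mp hR with h' | hRe
      · exact absurd h'.symm hPR
      · have hRmem := Finset.mem_of_mem_erase hRe
        have hRne := (Finset.mem_erase.mp hRe).1
        rw [hkey R hRmem hRne v hv u hu, hkey R hRmem hRne v' hv' u' hu']
        exact hgp'.mono P₀ hP₀ R hRmem (fun h => hRne h.symm) x₀ hx₀P₀ v hv x₀ hx₀P₀ v' hv'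
      · subst h'
        have hPmem := Finset.mem_of_mem_erase hPe
        have hPne := (Finset.mem_erase.mp hPe).1
        rw [hsym u v, hsym u' v']
        rw [hkey P hPmem hPne u hu v hv, hkey P hPmem hPne u' hu' v' hv']
        exact hgp'.mono P₀ hP₀ P hPmem (fun h => hPne h.symm) x₀ hx₀P₀ u hu x₀ hx₀P₀ u' hu'
      · exact hgp'.mono P (Finset.mem_of_mem_erase hPe) R (Finset.mem_of_mem_erase hRe) hPR
          u hu v hv u' hu' v' hv'
    · -- crossQ
      intro P hP R hR hPR u hu v hv
      rcases Finset.mem_insert.mp hP with rfl | hPe <;>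
        rcases Finset.mem_insert.mp hR with h' | hRe
      · exact absurd h'.symm hPR
      · have hRmem := Finset.mem_of_mem_erase hRe
        have hRne := (Finset.mem_erase.mp hRe).1
        rw [hkey R hRmem hRne v hv u hu]
        exact hgp'.crossQ P₀ hP₀ R hRmem (fun h => hRne h.symm) x₀ hx₀P₀ v hv
      · subst h'
        have hPmem := Finset.mem_of_mem_erase hPe
        have hPne := (Finset.mem_erase.mp hPe).1
        rw [hsym u v, hkey P hPmem hPne u hu v hv, hsym x₀ u]
        exact hgp'.crossQ P hPmem P₀ hP₀ hPne u hu x₀ hx₀P₀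
      · exact hgp'.crossQ P (Finset.mem_of_mem_erase hPe) R (Finset.mem_of_mem_erase hRe) hPR
          u hu v hv
  · -- at most two colors: singleton partition
    push_neg at hu
    refine ⟨S.image (fun a => ({a} : Finset α)), usedOn c S,
      ⟨?_, ?_, ?_, ?_, ?_, by omega⟩, ?_⟩
    · apply Finset.Subset.antisymm
      · intro w hw
        obtain ⟨P, hP, hwP⟩ := Finset.mem_biUnion.mp hw
        obtain ⟨a, ha, rfl⟩ := Finset.mem_image.mp hP
        rw [Finset.mem_singleton.mp hwP]
        exact ha
      · intro w hw
        exact Finset.mem_biUnion.mpr ⟨{w}, Finset.mem_image_of_mem _ hw,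
          Finset.mem_singleton_self _⟩
    · intro P hP
      obtain ⟨a, _, rfl⟩ := Finset.mem_image.mp hP
      exact ⟨a, Finset.mem_singleton_self _⟩
    · intro P hP R hR hPR
      obtain ⟨a, _, rfl⟩ := Finset.mem_image.mp hP
      obtain ⟨b, _, rfl⟩ := Finset.mem_image.mp hR
      exact Finset.disjoint_singleton.mpr (fun h => hPR (h ▸ rfl))
    · intro P hP R hR hPR u hu v hv u' hu' v' hv'
      obtain ⟨a, _, rfl⟩ := Finset.mem_image.mp hP
      obtain ⟨b, _, rfl⟩ := Finset.mem_image.mp hR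
      rw [Finset.mem_singleton.mp hu, Finset.mem_singleton.mp hv,
        Finset.mem_singleton.mp hu', Finset.mem_singleton.mp hv']
    · intro P hP R hR hPR u hu v hv
      obtain ⟨a, ha, rfl⟩ := Finset.mem_image.mp hP
      obtain ⟨b, hb, rfl⟩ := Finset.mem_image.mp hR
      rw [Finset.mem_singleton.mp hu, Finset.mem_singleton.mp hv]
      exact mem_usedOn ha hb (fun h => hPR (h ▸ rfl))
    · rw [Finset.card_image_of_injective _ (fun a b h => Finset.singleton_injective h)]
      omega

end ChungGrahamCore

section ChungGrahamNumeric


def NN : ℕ → ℕ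
  | 0 => 1
  | 1 => 2
  | (k+2) => 5 * NN k

lemma NN_pos : ∀ k, 1 ≤ NN k := by
  intro k
  induction k using Nat.twoStepInduction with
  | zero => simp [NN]
  | one => simp [NN]
  | more k ih _ => simp only [NN]; omega

lemma NN_two_mul_le : ∀ k, 2 * NN k ≤ NN (k+1) := by
  intro k
  induction k using Nat.twoStepInduction with
  | zero => simp [NN]
  | one => simp [NN]
  | more k ih _ => show 2 * (5 * NN k) ≤ 5 * NN (k+1); omega

lemma NN_succ_le_three_mul : ∀ k, NN (k+1) ≤ 3 * NN k := by
  intro k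
  induction k using Nat.twoStepInduction with
  | zero => simp [NN]
  | one => simp [NN]
  | more k ih _ => show 5 * NN (k+1) ≤ 3 * (5 * NN k); omega

lemma NN_le_succ (k : ℕ) : NN k ≤ NN (k+1) := by
  have h1 := NN_two_mul_le k
  omega

lemma NN_mono : Monotone NN := monotone_nat_of_le_succ NN_le_succ

lemma NN_case2 {k : ℕ} (hk : 1 ≤ k) : 2 * NN (k-1) ≤ NN k := by
  have h := NN_two_mul_le (k-1)
  have : k - 1 + 1 = k := by omega
  rwa [this] at h

lemma NN_case3 {k : ℕ} (hk : 2 ≤ k) : NN (k-1) + 2 * NN (k-2) ≤ NN k := by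
  have h1 := NN_succ_le_three_mul (k-2)
  have h2 : k - 2 + 1 = k - 1 := by omega
  have h3 : k - 2 + 2 = k := by omega
  have h4 : NN (k-2+2) = 5 * NN (k-2) := rfl
  rw [h2] at h1
  rw [h3] at h4
  omega

lemma NN_case5 {k : ℕ} (hk : 2 ≤ k) : 5 * NN (k-2) ≤ NN k := by
  have h4 : NN (k-2+2) = 5 * NN (k-2) := rfl
  have h3 : k - 2 + 2 = k := by omega
  rw [h3] at h4
  omega

lemma NN_even (m : ℕ) : NN (2*m) = 5^m := by
  induction m with
  | zero => rfl
  | succ m ih =>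
    have : 2*(m+1) = 2*m + 2 := by ring
    rw [this]
    show 5 * NN (2*m) = 5^(m+1)
    rw [ih, pow_succ]; ring

lemma NN_odd (m : ℕ) : NN (2*m+1) = 2 * 5^m := by
  induction m with
  | zero => rfl
  | succ m ih =>
    have : 2*(m+1)+1 = (2*m+1) + 2 := by ring
    rw [this]
    show 5 * NN (2*m+1) = 2 * 5^(m+1)
    rw [ih, pow_succ]; ring

end ChungGrahamNumeric

section ChungGrahamUB
set_option linter.unusedSectionVars false
set_option maxHeartbeats 1000000
variable {α : Type*} [DecidableEq α] {c : α → α → ℕ}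
theorem upper_bound (hsym : ∀ u v, c u v = c v u) :
    ∀ (k : ℕ) (K : Finset ℕ) (S : Finset α),
      K.card ≤ k → NoRainbowOn c S → NoMonoOn c S → usedOn c S ⊆ K →
      S.card ≤ NN k := by
  intro k
  induction k using Nat.strong_induction_on with
  | _ k IHk =>
  intro K S hK hnr hnm hused
  by_cases h2 : 2 ≤ S.card
  swap
  · have := NN_pos k; omega
  classical
  obtain ⟨parts, Q, hgp, hm2⟩ := gallai_partition_s19 hsym S.card S rfl h2 hnr
  have hpsub : ∀ P ∈ parts, P ⊆ S := fun P hP => hgp.part_subset hP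
  set AP : Finset α → Finset ℕ := fun P =>
    Q.filter (fun γ => ∃ R ∈ parts, R ≠ P ∧ ∃ u ∈ P, ∃ v ∈ R, c u v = γ) with hAPdef
  have hAPQ : ∀ P, AP P ⊆ Q := fun P => Finset.filter_subset _ _
  have hvne : ∀ P ∈ parts, ∀ R ∈ parts, R ≠ P → ∀ u ∈ P, ∀ v ∈ R, u ≠ v := by
    intro P hP R hR hne u hu v hv h
    subst h
    exact (Finset.disjoint_left.mp (hgp.disj R hR P hP hne) hv) hu
  have hcross_mem : ∀ P ∈ parts, ∀ R ∈ parts, R ≠ P → ∀ u ∈ P, ∀ v ∈ R,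
      c u v ∈ AP P := by
    intro P hP R hR hne u hu v hv
    exact Finset.mem_filter.mpr ⟨hgp.crossQ P hP R hR (Ne.symm hne) u hu v hv,
      ⟨R, hR, hne, u, hu, v, hv, rfl⟩⟩
  have hAP1 : ∀ P ∈ parts, 1 ≤ (AP P).card := by
    intro P hP
    obtain ⟨R, hR, hne⟩ := Finset.exists_mem_ne (s := parts) (by omega) P
    obtain ⟨u, hu⟩ := hgp.npty P hP
    obtain ⟨v, hv⟩ := hgp.npty R hR
    exact Finset.card_pos.mpr ⟨c u v, hcross_mem P hP R hR hne u hu v hv⟩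
  have hAPK : ∀ P ∈ parts, AP P ⊆ K := by
    intro P hP γ hγ
    obtain ⟨hγQ, R, hR, hne, u, hu, v, hv, rfl⟩ := Finset.mem_filter.mp hγ
    exact hused (mem_usedOn (hpsub P hP hu) (hpsub R hR hv)
      (hvne P hP R hR hne u hu v hv))
  have hAP2 : ∀ P ∈ parts, (AP P).card ≤ 2 :=
    fun P _ => le_trans (Finset.card_le_card (hAPQ P)) hgp.Qcard
  obtain ⟨Pw, hPw⟩ : parts.Nonempty := Finset.card_pos.mp (by omega)
  have hk1 : 1 ≤ k :=
    le_trans (le_trans (hAP1 Pw hPw) (Finset.card_le_card (hAPK Pw hPw))) hK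
  have hPbound : ∀ P ∈ parts, P.card ≤ NN (k - (AP P).card) := by
    intro P hP
    have ha1 := hAP1 P hP
    have haK := Finset.card_le_card (hAPK P hP)
    apply IHk (k - (AP P).card) (by omega) (K \ AP P) P
    · have : (K \ AP P).card = K.card - (AP P).card :=
        Finset.card_sdiff_of_subset (hAPK P hP)
      omega
    · intro a ha b hb d hd
      exact hnr a (hpsub P hP ha) b (hpsub P hP hb) d (hpsub P hP hd)
    · intro a ha b hb d hd h1 h2 h3
      exact hnm a (hpsub P hP ha) b (hpsub P hP hb) d (hpsub P hP hd) h1 h2 h3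
    · intro η hη
      obtain ⟨u, hu, u', hu', huu', he⟩ := usedOn_exists hη
      refine Finset.mem_sdiff.mpr ⟨hused (usedOn_mono (hpsub P hP) hη), ?_⟩
      intro hηAP
      obtain ⟨_, R, hR, hne, u₂, hu₂, v, hv, he₂⟩ := Finset.mem_filter.mp hηAP
      have hcv : c u v = c u₂ v := hgp.mono P hP R hR (Ne.symm hne) u hu v hv u₂ hu₂ v hv
      have hcv' : c u' v = c u₂ v := hgp.mono P hP R hR (Ne.symm hne) u' hu' v hv u₂ hu₂ v hv
      exact hnm u (hpsub P hP hu) u' (hpsub P hP hu') v (hpsub R hR hv)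
        huu' (hvne P hP R hR hne u hu v hv) (hvne P hP R hR hne u' hu' v hv)
        ⟨by rw [he, hcv, ← he₂], by rw [he, hcv', ← he₂]⟩
  have hPb1 : ∀ P ∈ parts, P.card ≤ NN (k - 1) := by
    intro P hP
    exact le_trans (hPbound P hP) (NN_mono (by have := hAP1 P hP; omega))
  have hPb2 : ∀ P ∈ parts, (AP P).card = 2 → P.card ≤ NN (k - 2) := by
    intro P hP h
    exact le_trans (hPbound P hP) (NN_mono (by omega))
  have hsum : S.card = ∑ P ∈ parts, P.card := by
    have h := Finset.card_biUnion (s := parts) (t := id)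
      (fun P hP R hR hne => hgp.disj P hP R hR hne)
    rw [hgp.cover] at h
    simpa using h
  have hAPsing : ∀ P ∈ parts, (AP P).card = 1 →
      ∃ γ ∈ Q, ∀ R ∈ parts, R ≠ P → ∀ u ∈ P, ∀ v ∈ R, c u v = γ := by
    intro P hP h1
    obtain ⟨γ, hγeq⟩ := Finset.card_eq_one.mp h1
    have hγQ : γ ∈ Q := hAPQ P (hγeq ▸ Finset.mem_singleton_self γ)
    refine ⟨γ, hγQ, fun R hR hne u hu v hv => ?_⟩
    have := hcross_mem P hP R hR hne u hu v hv
    rw [hγeq] at this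
    exact Finset.mem_singleton.mp this
  have key3 : ∀ P ∈ parts, ∀ R1 ∈ parts, ∀ R2 ∈ parts, ∀ R3 ∈ parts,
      R1 ≠ P → R2 ≠ P → R3 ≠ P → R1 ≠ R2 → R1 ≠ R3 → R2 ≠ R3 →
      ∀ γ, (∀ u ∈ P, ∀ v ∈ R1, c u v = γ) → (∀ u ∈ P, ∀ v ∈ R2, c u v = γ) →
        (∀ u ∈ P, ∀ v ∈ R3, c u v = γ) → False := by
    intro P hP R1 hR1 R2 hR2 R3 hR3 h1P h2P h3P h12 h13 h23 γ hc1 hc2 hc3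
    obtain ⟨u, hu⟩ := hgp.npty P hP
    obtain ⟨v1, hv1⟩ := hgp.npty R1 hR1
    obtain ⟨v2, hv2⟩ := hgp.npty R2 hR2
    obtain ⟨v3, hv3⟩ := hgp.npty R3 hR3
    have hγQ : γ ∈ Q := by
      have := hgp.crossQ P hP R1 hR1 (Ne.symm h1P) u hu v1 hv1
      rwa [hc1 u hu v1 hv1] at this
    have hQe : (Q.erase γ).card ≤ 1 := by
      have := Finset.card_erase_of_mem hγQ
      have := hgp.Qcard
      omega
    have hne12 : c v1 v2 ≠ γ := by
      intro h
      exact hnm u (hpsub P hP hu) v1 (hpsub R1 hR1 hv1) v2 (hpsub R2 hR2 hv2)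
        (hvne P hP R1 hR1 h1P u hu v1 hv1) (hvne P hP R2 hR2 h2P u hu v2 hv2)
        (hvne R1 hR1 R2 hR2 (Ne.symm h12) v1 hv1 v2 hv2)
        ⟨(hc1 u hu v1 hv1).trans (hc2 u hu v2 hv2).symm, (hc1 u hu v1 hv1).trans h.symm⟩
    have hne13 : c v1 v3 ≠ γ := by
      intro h
      exact hnm u (hpsub P hP hu) v1 (hpsub R1 hR1 hv1) v3 (hpsub R3 hR3 hv3)
        (hvne P hP R1 hR1 h1P u hu v1 hv1) (hvne P hP R3 hR3 h3P u hu v3 hv3)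
        (hvne R1 hR1 R3 hR3 (Ne.symm h13) v1 hv1 v3 hv3)
        ⟨(hc1 u hu v1 hv1).trans (hc3 u hu v3 hv3).symm, (hc1 u hu v1 hv1).trans h.symm⟩
    have hne23 : c v2 v3 ≠ γ := by
      intro h
      exact hnm u (hpsub P hP hu) v2 (hpsub R2 hR2 hv2) v3 (hpsub R3 hR3 hv3)
        (hvne P hP R2 hR2 h2P u hu v2 hv2) (hvne P hP R3 hR3 h3P u hu v3 hv3)
        (hvne R2 hR2 R3 hR3 (Ne.symm h23) v2 hv2 v3 hv3)
        ⟨(hc2 u hu v2 hv2).trans (hc3 u hu v3 hv3).symm, (hc2 u hu v2 hv2).trans h.symm⟩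
    have hm12 : c v1 v2 ∈ Q.erase γ := Finset.mem_erase.mpr
      ⟨hne12, hgp.crossQ R1 hR1 R2 hR2 h12 v1 hv1 v2 hv2⟩
    have hm13 : c v1 v3 ∈ Q.erase γ := Finset.mem_erase.mpr
      ⟨hne13, hgp.crossQ R1 hR1 R3 hR3 h13 v1 hv1 v3 hv3⟩
    have hm23 : c v2 v3 ∈ Q.erase γ := Finset.mem_erase.mpr
      ⟨hne23, hgp.crossQ R2 hR2 R3 hR3 h23 v2 hv2 v3 hv3⟩
    have heq1 : c v1 v2 = c v1 v3 := Finset.card_le_one.mp hQe _ hm12 _ hm13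
    have heq2 : c v1 v2 = c v2 v3 := Finset.card_le_one.mp hQe _ hm12 _ hm23
    exact hnm v1 (hpsub R1 hR1 hv1) v2 (hpsub R2 hR2 hv2) v3 (hpsub R3 hR3 hv3)
      (hvne R1 hR1 R2 hR2 (Ne.symm h12) v1 hv1 v2 hv2)
      (hvne R1 hR1 R3 hR3 (Ne.symm h13) v1 hv1 v3 hv3)
      (hvne R2 hR2 R3 hR3 (Ne.symm h23) v2 hv2 v3 hv3)
      ⟨heq1, heq2⟩
  -- extract three distinct parts, all different from members of a finset `avoid`
  have hthree : ∀ (s : Finset (Finset α)), 3 ≤ s.card →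
      ∃ R1 ∈ s, ∃ R2 ∈ s, ∃ R3 ∈ s, R1 ≠ R2 ∧ R1 ≠ R3 ∧ R2 ≠ R3 := by
    intro s hs
    obtain ⟨R1, hR1⟩ := (Finset.card_pos (s := s)).mp (by omega)
    obtain ⟨R2, hR2, h21⟩ := Finset.exists_mem_ne (s := s) (by omega) R1
    have hcd : 1 ≤ (s \ {R1, R2}).card := by
      have h1 : s.card - ({R1, R2} : Finset (Finset α)).card
          ≤ (s \ {R1, R2}).card := Finset.le_card_sdiff _ _
      have h2 : ({R1, R2} : Finset (Finset α)).card ≤ 2 := by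
        have := Finset.card_insert_le R1 ({R2} : Finset (Finset α))
        simp only [Finset.card_singleton] at this
        omega
      omega
    obtain ⟨R3, hR3⟩ := Finset.card_pos.mp hcd
    have hR3s := (Finset.mem_sdiff.mp hR3).1
    have hR3n := (Finset.mem_sdiff.mp hR3).2
    simp only [Finset.mem_insert, Finset.mem_singleton, not_or] at hR3n
    exact ⟨R1, hR1, R2, hR2, R3, hR3s, fun h => h21 h.symm,
      fun h => hR3n.1 h.symm, fun h => hR3n.2 h.symm⟩
  have hm5 : parts.card ≤ 5 := by
    by_contra hbig
    push_neg at hbig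
    obtain ⟨p₀, hp₀⟩ := hgp.npty Pw hPw
    set others := parts.erase Pw with hodef
    have hocard : 5 ≤ others.card := by
      rw [hodef, Finset.card_erase_of_mem hPw]; omega
    set f : Finset α → ℕ := fun R => if h : R.Nonempty then c p₀ h.choose else 0 with hfdef
    have hmaps : ∀ R ∈ others, f R ∈ Q := by
      intro R hR
      have hRp := Finset.mem_of_mem_erase hR
      have hRne := (Finset.mem_erase.mp hR).1
      have hRn : R.Nonempty := hgp.npty R hRp
      simp only [hfdef, dif_pos hRn]
      exact hgp.crossQ Pw hPw R hRp (Ne.symm hRne) p₀ hp₀ _ hRn.choose_spec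
    have hpig : Q.card * 2 < others.card := by
      have := hgp.Qcard; omega
    obtain ⟨q, hqQ, hfib⟩ :=
      Finset.exists_lt_card_fiber_of_mul_lt_card_of_maps_to hmaps hpig
    set fib := others.filter (fun R => f R = q) with hfibdef
    obtain ⟨R1, hR1, R2, hR2, R3, hR3, h12, h13, h23⟩ := hthree fib (by omega)
    have hmem : ∀ R ∈ fib, R ∈ parts ∧ R ≠ Pw ∧ ∀ u ∈ Pw, ∀ v ∈ R, c u v = q := by
      intro R hR
      have h1 := Finset.mem_filter.mp hR
      have hRp := Finset.mem_of_mem_erase h1.1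
      have hRne := (Finset.mem_erase.mp h1.1).1
      refine ⟨hRp, hRne, fun u hu v hv => ?_⟩
      have hRn : R.Nonempty := hgp.npty R hRp
      have hfeq := h1.2
      simp only [hfdef, dif_pos hRn] at hfeq
      have := hgp.mono Pw hPw R hRp (Ne.symm hRne) u hu v hv p₀ hp₀ _ hRn.choose_spec
      rw [this, hfeq]
    obtain ⟨hR1p, hR1ne, hall1⟩ := hmem R1 hR1
    obtain ⟨hR2p, hR2ne, hall2⟩ := hmem R2 hR2
    obtain ⟨hR3p, hR3ne, hall3⟩ := hmem R3 hR3
    exact key3 Pw hPw R1 hR1p R2 hR2p R3 hR3p hR1ne hR2ne hR3ne h12 h13 h23 q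
      hall1 hall2 hall3
  -- filter of parts with a single cross color
  set t := parts.filter (fun P => (AP P).card = 1) with htdef
  have hAPval : ∀ P ∈ parts, P ∉ t → (AP P).card = 2 := by
    intro P hP hPt
    have h1 := hAP1 P hP
    have h2 := hAP2 P hP
    have : ¬ (AP P).card = 1 := fun h => hPt (Finset.mem_filter.mpr ⟨hP, h⟩)
    omega
  have hsum_le : S.card ≤ t.card * NN (k-1) + (parts.card - t.card) * NN (k-2) ∨
      S.card ≤ 2 * NN (k-1) := by
    by_cases hm2' : parts.card = 2
    · right
      calc S.card = ∑ P ∈ parts, P.card := hsum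
        _ ≤ parts.card * NN (k-1) := by
            have := Finset.sum_le_card_nsmul parts (fun P => P.card) (NN (k-1))
              (fun P hP => hPb1 P hP)
            simpa using this
        _ = 2 * NN (k-1) := by rw [hm2']
    · left
      have hsplit : ∑ P ∈ parts, P.card =
          ∑ P ∈ t, P.card + ∑ P ∈ parts.filter (fun P => ¬ (AP P).card = 1), P.card := by
        rw [htdef]
        exact (Finset.sum_filter_add_sum_filter_not parts _ _).symm
      have hb1 : ∑ P ∈ t, P.card ≤ t.card * NN (k-1) := by
        have := Finset.sum_le_card_nsmul t (fun P => P.card) (NN (k-1))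
          (fun P hP => hPb1 P (Finset.mem_filter.mp hP).1)
        simpa using this
      have hb2 : ∑ P ∈ parts.filter (fun P => ¬ (AP P).card = 1), P.card ≤
          (parts.card - t.card) * NN (k-2) := by
        have hcc : (parts.filter (fun P => ¬ (AP P).card = 1)).card =
            parts.card - t.card := by
          rw [htdef, Finset.filter_not, Finset.card_sdiff_of_subset (Finset.filter_subset _ _)]
        have := Finset.sum_le_card_nsmul (parts.filter (fun P => ¬ (AP P).card = 1))
          (fun P => P.card) (NN (k-2))
          (fun P hP => by
            have h1 := Finset.mem_filter.mp hP
            exact hPb2 P h1.1 (by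
              have := hAP1 P h1.1
              have := hAP2 P h1.1
              have := h1.2
              omega))
        rw [hcc] at this
        simpa using this
      omega
  have ht1 : 3 ≤ parts.card → t.card ≤ 1 := by
    intro h3
    apply Finset.card_le_one.mpr
    intro P hPt R hRt
    by_contra hPR
    have hP := (Finset.mem_filter.mp hPt).1
    have hR := (Finset.mem_filter.mp hRt).1
    obtain ⟨γP, hγPQ, hallP⟩ := hAPsing P hP (Finset.mem_filter.mp hPt).2
    obtain ⟨γR, hγRQ, hallR⟩ := hAPsing R hR (Finset.mem_filter.mp hRt).2
    obtain ⟨u, hu⟩ := hgp.npty P hP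
    obtain ⟨v, hv⟩ := hgp.npty R hR
    have hγeq : γP = γR := by
      have h1 : c u v = γP := hallP R hR (fun h => hPR h.symm) u hu v hv
      have h2 : c v u = γR := hallR P hP (fun h => hPR h) v hv u hu
      rw [← h1, ← h2, hsym]
    have hcd : 1 ≤ ((parts.erase P).erase R).card := by
      rw [Finset.card_erase_of_mem (Finset.mem_erase.mpr ⟨fun h => hPR h.symm, hR⟩),
        Finset.card_erase_of_mem hP]
      omega
    obtain ⟨R'', hR''⟩ := Finset.card_pos.mp hcd
    have hR''R := (Finset.mem_erase.mp hR'').1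
    have hR''P := (Finset.mem_erase.mp (Finset.mem_of_mem_erase hR'')).1
    have hR''p := Finset.mem_of_mem_erase (Finset.mem_of_mem_erase hR'')
    obtain ⟨w, hw⟩ := hgp.npty R'' hR''p
    have h1 : c u v = γP := hallP R hR (fun h => hPR h.symm) u hu v hv
    have h2 : c u w = γP := hallP R'' hR''p hR''P u hu w hw
    have h3 : c v w = γR := hallR R'' hR''p hR''R v hv w hw
    exact hnm u (hpsub P hP hu) v (hpsub R hR hv) w (hpsub R'' hR''p hw)
      (hvne P hP R hR (fun h => hPR h.symm) u hu v hv)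
      (hvne P hP R'' hR''p hR''P u hu w hw)
      (hvne R hR R'' hR''p hR''R v hv w hw)
      ⟨h1.trans h2.symm, by rw [h1, h3, hγeq]⟩
  have ht0 : 4 ≤ parts.card → t.card = 0 := by
    intro h4
    rw [Finset.card_eq_zero]
    by_contra hne
    obtain ⟨P, hPt⟩ := Finset.nonempty_iff_ne_empty.mpr hne
    have hP := (Finset.mem_filter.mp hPt).1
    obtain ⟨γ, hγQ, hall⟩ := hAPsing P hP (Finset.mem_filter.mp hPt).2
    have hcd : 3 ≤ (parts.erase P).card := by
      rw [Finset.card_erase_of_mem hP]; omega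
    obtain ⟨R1, hR1, R2, hR2, R3, hR3, h12, h13, h23⟩ := hthree _ hcd
    have e1 := Finset.mem_erase.mp hR1
    have e2 := Finset.mem_erase.mp hR2
    have e3 := Finset.mem_erase.mp hR3
    exact key3 P hP R1 e1.2 R2 e2.2 R3 e3.2 e1.1 e2.1 e3.1 h12 h13 h23 γ
      (hall R1 e1.2 e1.1) (hall R2 e2.2 e2.1) (hall R3 e3.2 e3.1)
  -- Final numeric assembly
  rcases hsum_le with hle | hle
  · -- parts.card ∈ [3,5] here (the m=2 case went right); but handle uniformly:
    by_cases h3 : 3 ≤ parts.card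
    · have htc := ht1 h3
      have hk2 : 2 ≤ k := by
        -- some part is not in t
        have : t.card < parts.card := by omega
        obtain ⟨P, hP, hPt⟩ : ∃ P ∈ parts, P ∉ t := by
          by_contra hno
          push_neg at hno
          have : parts ⊆ t := fun P hP => hno P hP
          have := Finset.card_le_card this
          omega
        have h2' := hAPval P hP hPt
        have := Finset.card_le_card (hAPK P hP)
        omega
      have hNN12 : NN (k-2) ≤ NN (k-1) := NN_mono (by omega)
      by_cases h4 : 4 ≤ parts.card
      · have ht0' := ht0 h4
        rw [ht0'] at hle
        simp only [Nat.zero_mul, Nat.zero_add, Nat.sub_zero] at hle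
        calc S.card ≤ parts.card * NN (k-2) := hle
          _ ≤ 5 * NN (k-2) := Nat.mul_le_mul_right _ hm5
          _ ≤ NN k := NN_case5 hk2
      · have hm3 : parts.card = 3 := by omega
        have hc3 := NN_case3 hk2
        rcases Nat.le_one_iff_eq_zero_or_eq_one.mp htc with h0 | h1
        · rw [h0, hm3] at hle
          simp only [Nat.zero_mul, Nat.zero_add, Nat.sub_zero] at hle
          calc S.card ≤ 3 * NN (k-2) := hle
            _ ≤ NN (k-1) + 2 * NN (k-2) := by omega
            _ ≤ NN k := hc3
        · rw [h1, hm3] at hle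
          simp only [Nat.one_mul] at hle
          calc S.card ≤ NN (k-1) + (3-1) * NN (k-2) := hle
            _ = NN (k-1) + 2 * NN (k-2) := by norm_num
            _ ≤ NN k := hc3
    · -- parts.card = 2
      have hm2'' : parts.card = 2 := by omega
      have htc : t.card ≤ 2 := le_trans (Finset.card_le_card (Finset.filter_subset _ _)) (by omega)
      have : S.card ≤ 2 * NN (k-1) := by
        have hb := Finset.sum_le_card_nsmul parts (fun P => P.card) (NN (k-1))
          (fun P hP => hPb1 P hP)
        rw [hsum]
        calc ∑ P ∈ parts, P.card ≤ parts.card * NN (k-1) := by simpa using hb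
          _ = 2 * NN (k-1) := by rw [hm2'']
      exact le_trans this (NN_case2 hk1)
  · exact le_trans hle (NN_case2 hk1)

end ChungGrahamUB

section ChungGrahamLB
set_option maxHeartbeats 1000000
def Good (n k : ℕ) : Prop :=
  ∃ c : Fin n → Fin n → Fin k,
    (∀ u v, c u v = c v u) ∧ ¬ HasRainbowTriangle c ∧ ¬ HasMonoTriangle c

def pent : Fin 5 → Fin 5 → Fin 2 := fun i j =>
  if (i.val + 1) % 5 = j.val ∨ (j.val + 1) % 5 = i.val then 0 else 1

lemma pent_sym : ∀ i j, pent i j = pent j i := by decide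

lemma pent_nomono : ∀ i j l : Fin 5, i ≠ j → i ≠ l → j ≠ l →
    ¬(pent i j = pent i l ∧ pent i j = pent j l) := by decide

lemma fin2_cases : ∀ a b c : Fin 2, a = b ∨ a = c ∨ b = c := by decide

lemma Good.cast {n k n' k' : ℕ} (h : Good n k) (hn : n = n') (hk : k = k') :
    Good n' k' := by subst hn; subst hk; exact h

lemma good21 : Good 2 1 :=
  ⟨fun _ _ => 0, by decide, by unfold HasRainbowTriangle; decide,
    by unfold HasMonoTriangle; decide⟩

lemma good52 : Good 5 2 :=
  ⟨pent, pent_sym, by unfold HasRainbowTriangle; decide,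
    by unfold HasMonoTriangle; decide⟩

lemma goodStep {n k : ℕ} (h : Good n k) : Good (5*n) (k+2) := by
  obtain ⟨c, hs, hr, hm⟩ := h
  have hn5 : ∀ u : Fin (5*n), u.val / 5 < n := fun u => by have := u.isLt; omega
  set qf : Fin (5*n) → Fin n := fun u => ⟨u.val / 5, hn5 u⟩ with hqf
  set rf : Fin (5*n) → Fin 5 := fun u => ⟨u.val % 5, by omega⟩ with hrf
  set c' : Fin (5*n) → Fin (5*n) → Fin (k+2) := fun u v =>
    if qf u = qf v then
      ⟨k + (pent (rf u) (rf v)).val, by have := (pent (rf u) (rf v)).isLt; omega⟩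
    else Fin.castLE (by omega) (c (qf u) (qf v)) with hc'
  have hval : ∀ u v : Fin (5*n), qf u = qf v → rf u = rf v → u = v := by
    intro u v h1 h2
    have e1 : u.val / 5 = v.val / 5 := congrArg Fin.val h1
    have e2 : u.val % 5 = v.val % 5 := congrArg Fin.val h2
    exact Fin.ext (by omega)
  have hinner : ∀ u v, qf u = qf v →
      c' u v = ⟨k + (pent (rf u) (rf v)).val, by have := (pent (rf u) (rf v)).isLt; omega⟩ := by
    intro u v h; simp only [hc', if_pos h]
  have hcross : ∀ u v, qf u ≠ qf v → c' u v = Fin.castLE (by omega) (c (qf u) (qf v)) := by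
    intro u v h; simp only [hc', if_neg h]
  refine ⟨c', ?_, ?_, ?_⟩
  · intro u v
    by_cases h : qf u = qf v
    · rw [hinner u v h, hinner v u h.symm]
      exact Fin.ext (by simp [pent_sym (rf u) (rf v)])
    · rw [hcross u v h, hcross v u (fun hh => h hh.symm)]
      rw [hs]
  · rintro ⟨u, v, w, huv, huw, hvw, h1, h2, h3⟩
    by_cases hq1 : qf u = qf v <;> by_cases hq2 : qf u = qf w
    · -- all inner
      have hq3 : qf v = qf w := hq1.symm.trans hq2
      rcases fin2_cases (pent (rf u) (rf v)) (pent (rf u) (rf w)) (pent (rf v) (rf w))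
        with h | h | h
      · exact h1 (by rw [hinner u v hq1, hinner u w hq2]; exact Fin.ext (by simp [h]))
      · exact h2 (by rw [hinner u v hq1, hinner v w hq3]; exact Fin.ext (by simp [h]))
      · exact h3 (by rw [hinner u w hq2, hinner v w hq3]; exact Fin.ext (by simp [h]))
    · -- qu = qv, qu ≠ qw : cross edges uw, vw agree
      have hq3 : qf v ≠ qf w := fun h => hq2 (hq1.trans h)
      exact h3 (by rw [hcross u w hq2, hcross v w hq3, hq1])
    · -- qu ≠ qv, qu = qw
      have hq3 : qf v ≠ qf w := fun h => hq1 (hq2.trans h.symm)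
      refine h2 ?_
      rw [hcross u v hq1, hcross v w hq3, ← hq2]
      congr 1
      rw [hs]
    · by_cases hq3 : qf v = qf w
      · exact h1 (by rw [hcross u v hq1, hcross u w hq2, hq3])
      · -- all distinct: rainbow in c
        apply hr
        refine ⟨qf u, qf v, qf w, hq1, hq2, hq3, ?_, ?_, ?_⟩
        · intro heq
          exact h1 (by rw [hcross u v hq1, hcross u w hq2, heq])
        · intro heq
          exact h2 (by rw [hcross u v hq1, hcross v w hq3, heq])
        · intro heq
          exact h3 (by rw [hcross u w hq2, hcross v w hq3, heq])
  · rintro ⟨u, v, w, huv, huw, hvw, e1, e2⟩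
    by_cases hq1 : qf u = qf v <;> by_cases hq2 : qf u = qf w
    · have hq3 : qf v = qf w := hq1.symm.trans hq2
      apply pent_nomono (rf u) (rf v) (rf w)
        (fun h => huv (hval u v hq1 h)) (fun h => huw (hval u w hq2 h))
        (fun h => hvw (hval v w hq3 h))
      constructor
      · have := e1
        rw [hinner u v hq1, hinner u w hq2] at this
        have hv := congrArg Fin.val this
        simp only at hv
        exact Fin.ext (by omega)
      · have := e2
        rw [hinner u v hq1, hinner v w hq3] at this
        have hv := congrArg Fin.val this
        simp only at hv
        exact Fin.ext (by omega)
    · have := e1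
      rw [hinner u v hq1, hcross u w hq2] at this
      have hv := congrArg Fin.val this
      have hlt : (c (qf u) (qf w)).val < k := (c (qf u) (qf w)).isLt
      simp only [Fin.coe_castLE] at hv
      omega
    · have := e1
      rw [hcross u v hq1, hinner u w hq2] at this
      have hv := congrArg Fin.val this
      have hlt : (c (qf u) (qf v)).val < k := (c (qf u) (qf v)).isLt
      simp only [Fin.coe_castLE] at hv
      omega
    · by_cases hq3 : qf v = qf w
      · have := e2
        rw [hcross u v hq1, hinner v w hq3] at this
        have hv := congrArg Fin.val this
        have hlt : (c (qf u) (qf v)).val < k := (c (qf u) (qf v)).isLt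
        simp only [Fin.coe_castLE] at hv
        omega
      · apply hm
        refine ⟨qf u, qf v, qf w, hq1, hq2, hq3, ?_, ?_⟩
        · have := e1
          rw [hcross u v hq1, hcross u w hq2] at this
          exact Fin.ext (by have := congrArg Fin.val this; simpa using this)
        · have := e2
          rw [hcross u v hq1, hcross v w hq3] at this
          exact Fin.ext (by have := congrArg Fin.val this; simpa using this)
  
lemma goodEven : ∀ m : ℕ, Good (5^(m+1)) (2*(m+1)) := by
  intro m
  induction m with
  | zero => exact good52.cast (by norm_num) (by norm_num)
  | succ m ih =>
    exact (goodStep ih).cast (by ring) (by ring)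

lemma goodOdd : ∀ m : ℕ, Good (2*5^m) (2*m+1) := by
  intro m
  induction m with
  | zero => exact good21.cast (by norm_num) (by norm_num)
  | succ m ih =>
    exact (goodStep ih).cast (by ring) (by ring)


end ChungGrahamLB

/-- **Chung–Graham.**  For every integer `k ≥ 1`: if `k` is even then
`GR_k(K_3) = 5^{k/2} + 1`, and if `k` is odd then `GR_k(K_3) = 2·5^{(k−1)/2} + 1`.
In each case, every Gallai `k`-coloring of the complete graph on that many vertices
contains a monochromatic triangle, and there is a Gallai `k`-coloring of the complete
graph on one fewer vertex with no monochromatic triangle. -/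
theorem gallai_ramsey_triangle_exact (k : ℕ) (hk : 1 ≤ k) :
    (Even k →
      (∀ c : Fin (5 ^ (k / 2) + 1) → Fin (5 ^ (k / 2) + 1) → Fin k,
        IsSymmColoring c → ¬ HasRainbowTriangle c → HasMonoTriangle c) ∧
      (∃ c : Fin (5 ^ (k / 2)) → Fin (5 ^ (k / 2)) → Fin k,
        IsSymmColoring c ∧ ¬ HasRainbowTriangle c ∧ ¬ HasMonoTriangle c)) ∧
    (Odd k →
      (∀ c : Fin (2 * 5 ^ ((k - 1) / 2) + 1) → Fin (2 * 5 ^ ((k - 1) / 2) + 1) → Fin k,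
        IsSymmColoring c → ¬ HasRainbowTriangle c → HasMonoTriangle c) ∧
      (∃ c : Fin (2 * 5 ^ ((k - 1) / 2)) → Fin (2 * 5 ^ ((k - 1) / 2)) → Fin k,
        IsSymmColoring c ∧ ¬ HasRainbowTriangle c ∧ ¬ HasMonoTriangle c)) := by
  constructor
  · intro hev
    obtain ⟨r, hr⟩ := hev
    have hk2 : k = 2*r := by omega
    subst hk2
    have hdiv : (2*r)/2 = r := by omega
    constructor
    · intro cc hsymc hnorb
      by_contra hmono
      have hnr : NoRainbowOn (fun u v => (cc u v).val) Finset.univ := by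
        intro u _ v _ w _
        by_cases huv : u = v
        · exact Or.inr (Or.inr (by rw [huv]))
        by_cases huw : u = w
        · subst huw
          exact Or.inr (Or.inl (congrArg Fin.val (hsymc u v)))
        by_cases hvw : v = w
        · exact Or.inl (by rw [hvw])
        by_contra hno
        unfold TriOK at hno
        push_neg at hno
        exact hnorb ⟨u, v, w, huv, huw, hvw,
          fun h => hno.1 (congrArg Fin.val h),
          fun h => hno.2.1 (congrArg Fin.val h),
          fun h => hno.2.2 (congrArg Fin.val h)⟩
      have hnm : NoMonoOn (fun u v => (cc u v).val) Finset.univ := by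
        intro u _ v _ w _ h1 h2 h3 he
        exact hmono ⟨u, v, w, h1, h2, h3, Fin.ext he.1, Fin.ext he.2⟩
      have husub : usedOn (fun u v => (cc u v).val) Finset.univ ⊆
          Finset.range (2*r) := by
        intro γ hγ
        obtain ⟨u, _, v, _, _, he⟩ := usedOn_exists hγ
        rw [← he]
        exact Finset.mem_range.mpr ((cc u v).isLt)
      have hub := upper_bound (fun u v => congrArg Fin.val (hsymc u v))
        (2*r) (Finset.range (2*r)) Finset.univ
        (le_of_eq (Finset.card_range _)) hnr hnm husub
      have hcard : (Finset.univ : Finset (Fin (5 ^ (2*r/2) + 1))).card = 5 ^ (2*r/2) + 1 := by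
        simp
      rw [hcard, NN_even r, hdiv] at hub
      omega
    · rw [hdiv]
      have hr1 : 1 ≤ r := by omega
      obtain ⟨m, rfl⟩ : ∃ m, r = m+1 := ⟨r-1, by omega⟩
      obtain ⟨c, h1, h2, h3⟩ := goodEven m
      exact ⟨c, h1, h2, h3⟩
  · intro hodd
    obtain ⟨m, rfl⟩ := hodd
    have hdiv : (2*m+1-1)/2 = m := by omega
    constructor
    · intro cc hsymc hnorb
      by_contra hmono
      have hnr : NoRainbowOn (fun u v => (cc u v).val) Finset.univ := by
        intro u _ v _ w _
        by_cases huv : u = v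
        · exact Or.inr (Or.inr (by rw [huv]))
        by_cases huw : u = w
        · subst huw
          exact Or.inr (Or.inl (congrArg Fin.val (hsymc u v)))
        by_cases hvw : v = w
        · exact Or.inl (by rw [hvw])
        by_contra hno
        unfold TriOK at hno
        push_neg at hno
        exact hnorb ⟨u, v, w, huv, huw, hvw,
          fun h => hno.1 (congrArg Fin.val h),
          fun h => hno.2.1 (congrArg Fin.val h),
          fun h => hno.2.2 (congrArg Fin.val h)⟩
      have hnm : NoMonoOn (fun u v => (cc u v).val) Finset.univ := by
        intro u _ v _ w _ h1 h2 h3 he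
        exact hmono ⟨u, v, w, h1, h2, h3, Fin.ext he.1, Fin.ext he.2⟩
      have husub : usedOn (fun u v => (cc u v).val) Finset.univ ⊆
          Finset.range (2*m+1) := by
        intro γ hγ
        obtain ⟨u, _, v, _, _, he⟩ := usedOn_exists hγ
        rw [← he]
        exact Finset.mem_range.mpr ((cc u v).isLt)
      have hub := upper_bound (fun u v => congrArg Fin.val (hsymc u v))
        (2*m+1) (Finset.range (2*m+1)) Finset.univ
        (le_of_eq (Finset.card_range _)) hnr hnm husub
      have hcard : (Finset.univ : Finset (Fin (2 * 5 ^ ((2*m+1-1)/2) + 1))).card = 2 * 5 ^ ((2*m+1-1)/2) + 1 := by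
        simp
      rw [hcard, NN_odd m, hdiv] at hub
      omega
    · rw [hdiv]
      obtain ⟨c, h1, h2, h3⟩ := goodOdd m
      exact ⟨c, h1, h2, h3⟩
end
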